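/- arXiv:2203.16861 — 11 statements merged into one kernel-verified Lean document; each statement's English description precedes it below -/
import Mathlib

section
/- For any graph G and integer k ≥ 1, L_k(G) is isomorphic to TS_k(complement of G) if and only if G contains no clique of size k+1. -/
open SimpleGraph

/-- `I` is an independent (stable) set of `G`. -/
def IsIndep {V : Type*} (G : SimpleGraph V) (I : Finset V) : Prop :=
  ∀ u ∈ I, ∀ v ∈ I, ¬ G.Adj u v

/-- Vertices of the `TS_k`-reconfiguration graph: size-`k` independent sets of `G`. -/
abbrev TSVert {V : Type*} (G : SimpleGraph V) (k : ℕ) := {I : Finset V // I.card = k ∧ IsIndep G I}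

/-- The `TS_k`-reconfiguration graph of `G`: size-`k` independent sets, adjacent iff
`I \ J = {u}`, `J \ I = {v}` and `uv ∈ E(G)`. -/
def TSk {V : Type*} [DecidableEq V] (G : SimpleGraph V) (k : ℕ) : SimpleGraph (TSVert G k) :=
  SimpleGraph.fromRel (fun I J =>
    ∃ u v, (I : Finset V) \ (J : Finset V) = {u} ∧
      (J : Finset V) \ (I : Finset V) = {v} ∧ G.Adj u v)

/-- Vertices of `L_k(G)`: size-`k` cliques of `G`. -/
abbrev LkVert {V : Type*} (G : SimpleGraph V) (k : ℕ) :=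
  {K : Finset V // K.card = k ∧ ∀ u ∈ K, ∀ v ∈ K, u ≠ v → G.Adj u v}

/-- `L_k(G)`: size-`k` cliques of `G`, two cliques adjacent iff they share exactly
`k - 1` vertices. -/
def Lk {V : Type*} [DecidableEq V] (G : SimpleGraph V) (k : ℕ) : SimpleGraph (LkVert G k) :=
  SimpleGraph.fromRel (fun K K' => ((K : Finset V) ∩ (K' : Finset V)).card = k - 1)

private lemma aux_sdiff_singletons {V : Type*} [DecidableEq V] {K K' : Finset V} {k : ℕ}
    (hk : 1 ≤ k) (hK : K.card = k) (hK' : K'.card = k)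
    (hint : (K ∩ K').card = k - 1) :
    ∃ u v, K \ K' = {u} ∧ K' \ K = {v} := by
  have e1 := Finset.card_sdiff_add_card_inter K K'
  have e2 := Finset.card_sdiff_add_card_inter K' K
  rw [Finset.inter_comm] at e2
  have h1 : (K \ K').card = 1 := by omega
  have h2 : (K' \ K).card = 1 := by omega
  obtain ⟨u, hu⟩ := Finset.card_eq_one.mp h1
  obtain ⟨v, hv⟩ := Finset.card_eq_one.mp h2
  exact ⟨u, v, hu, hv⟩

private lemma aux_inter_card {V : Type*} [DecidableEq V] {K K' : Finset V} {k : ℕ} {u : V}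
    (hK : K.card = k) (hu : K \ K' = {u}) : (K ∩ K').card = k - 1 := by
  have e1 := Finset.card_sdiff_add_card_inter K K'
  rw [hu, Finset.card_singleton] at e1
  omega

private lemma aux_clique {V : Type*} [DecidableEq V] {G : SimpleGraph V} {K K' : Finset V}
    {u v : V}
    (hKc : ∀ a ∈ K, ∀ b ∈ K, a ≠ b → G.Adj a b)
    (hK'c : ∀ a ∈ K', ∀ b ∈ K', a ≠ b → G.Adj a b)
    (hu : K \ K' = {u}) (hv : K' \ K = {v}) (hadj : G.Adj u v) :
    G.IsNClique (K.card + 1) (insert v K) := by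
  have hvmem : v ∈ K' \ K := by rw [hv]; exact Finset.mem_singleton_self v
  have hvK : v ∉ K := (Finset.mem_sdiff.mp hvmem).2
  have hvK' : v ∈ K' := (Finset.mem_sdiff.mp hvmem).1
  have key : ∀ b ∈ K, b ≠ v → G.Adj v b := by
    intro b hb hbv
    by_cases hbu : b = u
    · subst hbu; exact hadj.symm
    · have hbK' : b ∈ K' := by
        by_contra hbn
        have : b ∈ K \ K' := Finset.mem_sdiff.mpr ⟨hb, hbn⟩
        rw [hu, Finset.mem_singleton] at this
        exact hbu this
      exact hK'c v hvK' b hbK' (Ne.symm hbv)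
  constructor
  · intro a ha b hb hab
    simp only [Finset.coe_insert, Set.mem_insert_iff, Finset.mem_coe] at ha hb
    rcases ha with ha | ha <;> rcases hb with hb | hb
    · exact absurd (ha.trans hb.symm) hab
    · subst ha; exact key b hb (Ne.symm hab)
    · subst hb; exact (key a ha hab).symm
    · exact hKc a ha b hb hab
  · rw [Finset.card_insert_of_notMem hvK]

/-- `L_k(G)` is isomorphic to `TS_k(Gᶜ)` iff `G` has no clique of size `k + 1`. -/
theorem stmt1 {V : Type*} [Fintype V] [DecidableEq V] (G : SimpleGraph V) (k : ℕ)
    (hk : 1 ≤ k) :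
    Nonempty (Lk G k ≃g TSk Gᶜ k) ↔ G.CliqueFree (k + 1) := by
  classical
  -- the equivalence between the two vertex types
  have hpt : ∀ K : Finset V,
      (K.card = k ∧ ∀ u ∈ K, ∀ v ∈ K, u ≠ v → G.Adj u v) ↔ (K.card = k ∧ IsIndep Gᶜ K) := by
    intro K
    constructor
    · rintro ⟨hc, h⟩
      refine ⟨hc, fun u hu v hv hadj => ?_⟩
      rw [compl_adj] at hadj
      exact hadj.2 (h u hu v hv hadj.1)
    · rintro ⟨hc, h⟩
      refine ⟨hc, fun u hu v hv hne => ?_⟩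
      by_contra hadj
      exact h u hu v hv ((G.compl_adj u v).mpr ⟨hne, hadj⟩)
  let e : LkVert G k ≃ TSVert Gᶜ k := Equiv.subtypeEquivRight hpt
  have ecoe : ∀ K : LkVert G k, ((e K : TSVert Gᶜ k) : Finset V) = (K : Finset V) :=
    fun K => rfl
  set H : SimpleGraph (LkVert G k) := (TSk Gᶜ k).comap e with hHdef
  have hHadj : ∀ K K' : LkVert G k,
      H.Adj K K' ↔ (TSk Gᶜ k).Adj (e K) (e K') := fun _ _ => Iff.rfl
  have iso : H ≃g TSk Gᶜ k := ⟨e, Iff.rfl⟩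
  -- H ≤ Lk
  have hle : H ≤ Lk G k := by
    intro K K' hadj
    rw [hHadj] at hadj
    rw [TSk, fromRel_adj] at hadj
    obtain ⟨hne, h⟩ := hadj
    have hne' : K ≠ K' := fun h' => hne (by rw [h'])
    rw [Lk, fromRel_adj]
    refine ⟨hne', Or.inl ?_⟩
    rcases h with ⟨u, v, h1, h2, _⟩ | ⟨u, v, h1, h2, _⟩
    · exact aux_inter_card K.2.1 (by rw [← ecoe K, ← ecoe K']; exact h1)
    · rw [Finset.inter_comm]
      exact aux_inter_card K'.2.1 (by rw [← ecoe K, ← ecoe K']; exact h1)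
  constructor
  · -- isomorphism → clique-free
    rintro ⟨f⟩
    by_contra hcf
    rw [CliqueFree] at hcf
    push_neg at hcf
    obtain ⟨s, hs⟩ := hcf
    -- pick two distinct vertices of s
    have hcard2 : 1 < s.card := by rw [hs.2]; omega
    obtain ⟨u, hu, v, hv, huv⟩ := Finset.one_lt_card.mp hcard2
    -- the two k-cliques
    have herase : ∀ w ∈ s, (s.erase w).card = k ∧
        ∀ a ∈ s.erase w, ∀ b ∈ s.erase w, a ≠ b → G.Adj a b := by
      intro w hw
      refine ⟨by rw [Finset.card_erase_of_mem hw, hs.2]; omega, fun a ha b hb hab => ?_⟩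
      exact hs.1 (Finset.mem_of_mem_erase ha) (Finset.mem_of_mem_erase hb) hab
    set K : LkVert G k := ⟨s.erase v, herase v hv⟩ with hKdef
    set K' : LkVert G k := ⟨s.erase u, herase u hu⟩ with hK'def
    have hsd1 : (K : Finset V) \ (K' : Finset V) = {u} := by
      ext a
      simp only [hKdef, hK'def, Finset.mem_sdiff, Finset.mem_erase, Finset.mem_singleton]
      constructor
      · rintro ⟨⟨hav, has⟩, hna⟩
        by_contra hau
        exact hna ⟨hau, has⟩
      · rintro rfl
        exact ⟨⟨huv, hu⟩, fun h => h.1 rfl⟩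
    have hsd2 : (K' : Finset V) \ (K : Finset V) = {v} := by
      ext a
      simp only [hKdef, hK'def, Finset.mem_sdiff, Finset.mem_erase, Finset.mem_singleton]
      constructor
      · rintro ⟨⟨hau, has⟩, hna⟩
        by_contra hav
        exact hna ⟨hav, has⟩
      · rintro rfl
        exact ⟨⟨Ne.symm huv, hv⟩, fun h => h.1 rfl⟩
    have hKne : K ≠ K' := by
      intro h
      have : u ∈ (K : Finset V) \ (K' : Finset V) := by rw [hsd1]; exact Finset.mem_singleton_self u
      rw [h, Finset.sdiff_self] at this
      exact absurd this (Finset.notMem_empty u)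
    have hGadj : G.Adj u v := hs.1 hu hv huv
    -- Lk has the edge K K'
    have hLk : (Lk G k).Adj K K' := by
      rw [Lk, fromRel_adj]
      exact ⟨hKne, Or.inl (aux_inter_card K.2.1 hsd1)⟩
    -- H does not
    have hH : ¬ H.Adj K K' := by
      rw [hHadj, TSk, fromRel_adj]
      rintro ⟨-, h⟩
      rcases h with ⟨u', v', h1, h2, hadj⟩ | ⟨u', v', h1, h2, hadj⟩
      · rw [ecoe, ecoe, hsd1] at h1
        rw [ecoe, ecoe, hsd2] at h2
        rw [Finset.singleton_inj] at h1 h2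
        subst h1; subst h2
        rw [compl_adj] at hadj
        exact hadj.2 hGadj
      · rw [ecoe, ecoe, hsd2] at h1
        rw [ecoe, ecoe, hsd1] at h2
        rw [Finset.singleton_inj] at h1 h2
        subst h1; subst h2
        rw [compl_adj] at hadj
        exact hadj.2 hGadj.symm
    -- strict inequality of graphs
    have hlt : H < Lk G k := lt_of_le_of_ne hle (fun h => hH (h ▸ hLk))
    -- edge counts
    haveI : Fintype (LkVert G k) := Fintype.ofFinite _
    haveI : Fintype (TSVert Gᶜ k) := Fintype.ofFinite _
    haveI : Fintype (H.edgeSet) := Fintype.ofFinite _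
    haveI : Fintype ((Lk G k).edgeSet) := Fintype.ofFinite _
    haveI : Fintype ((TSk Gᶜ k).edgeSet) := Fintype.ofFinite _
    have hcardlt : H.edgeFinset.card < (Lk G k).edgeFinset.card :=
      Finset.card_lt_card (edgeFinset_strict_mono hlt)
    have fH : Lk G k ≃g H := iso.symm.comp f
    have := fH.card_edgeFinset_eq
    omega
  · -- clique-free → isomorphism
    intro hcf
    have hge : Lk G k ≤ H := by
      intro K K' hadj
      rw [Lk, fromRel_adj] at hadj
      obtain ⟨hne, h⟩ := hadj
      have hint : ((K : Finset V) ∩ (K' : Finset V)).card = k - 1 := by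
        rcases h with h | h
        · exact h
        · rw [Finset.inter_comm]; exact h
      obtain ⟨u, v, hu, hv⟩ := aux_sdiff_singletons hk K.2.1 K'.2.1 hint
      have humem : u ∈ (K : Finset V) \ (K' : Finset V) := by
        rw [hu]; exact Finset.mem_singleton_self u
      have hvmem : v ∈ (K' : Finset V) \ (K : Finset V) := by
        rw [hv]; exact Finset.mem_singleton_self v
      have huvne : u ≠ v := by
        rintro rfl
        exact (Finset.mem_sdiff.mp hvmem).2 (Finset.mem_sdiff.mp humem).1
      have hnadj : ¬ G.Adj u v := by
        intro hadj
        have := aux_clique K.2.2 K'.2.2 hu hv hadj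
        rw [K.2.1] at this
        exact hcf _ this
      rw [hHadj, TSk, fromRel_adj]
      refine ⟨fun h' => hne (e.injective h'), Or.inl ⟨u, v, ?_, ?_, (G.compl_adj u v).mpr ⟨huvne, hnadj⟩⟩⟩
      · rw [ecoe, ecoe]; exact hu
      · rw [ecoe, ecoe]; exact hv
    have heq : H = Lk G k := le_antisymm hle hge
    exact ⟨heq ▸ iso⟩
end

section
/- For all integers k ≥ 2 and n ≥ 2, there exists a graph G such that TS_k(G) is isomorphic to the complete graph K_n; moreover G can be chosen with n + k − 1 vertices. -/
open SimpleGraph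

/-!
Take `G` to be a clique `K_n` together with a set `T` of `k - 1` isolated vertices. An
independent set contains at most one clique vertex, so a `k`-element independent set must be
`T` plus exactly one clique vertex `c`. Two such sets `T + c`, `T + d` differ by sliding a
token along the clique edge `cd`, so `TS_k(G)` is the complete graph on the clique.
-/

open Finset

section CliqueWithIsolatedVertices

variable {V : Type*} [DecidableEq V] {G : SimpleGraph V} {T : Finset V}

lemma isIndep_insert_of_isolated (hT : ∀ t ∈ T, ∀ v, ¬ G.Adj t v) (c : V) :
    IsIndep G (insert c T) := by
  intro u hu v hv huv
  rcases mem_insert.mp hu with rfl | hu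
  · rcases mem_insert.mp hv with rfl | hv
    · exact G.irrefl huv
    · exact hT v hv u huv.symm
  · exact hT u hu v huv

lemma exists_eq_insert_of_isIndep (hclique : ∀ u v, u ∉ T → v ∉ T → u ≠ v → G.Adj u v)
    {J : Finset V} (hJ : IsIndep G J) (hcard : #J = #T + 1) :
    ∃ c ∉ T, J = insert c T := by
  have hout : #(J \ T) ≤ 1 := card_le_one.mpr fun a ha b hb => by
    rw [mem_sdiff] at ha hb
    by_contra hab
    exact hJ a ha.1 b hb.1 (hclique a b ha.2 hb.2 hab)
  have hin : #(J ∩ T) ≤ #T := card_le_card inter_subset_right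
  have hsplit := card_sdiff_add_card_inter J T
  obtain ⟨c, hc⟩ := card_eq_one.mp (show #(J \ T) = 1 by omega)
  have hTJ : J ∩ T = T :=
    eq_of_subset_of_card_le inter_subset_right (by omega)
  refine ⟨c, (mem_sdiff.mp (hc ▸ mem_singleton_self c)).2, ?_⟩
  rw [← sdiff_union_inter J T, hc, hTJ, insert_eq]

lemma insert_sdiff_insert_of_notMem {c d : V} (hc : c ∉ T) (hcd : c ≠ d) :
    insert c T \ insert d T = {c} := by
  rw [insert_sdiff_of_notMem _ (by simp [hc, hcd]),
    sdiff_eq_empty_iff_subset.mpr (subset_insert d T), insert_empty]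

def insertIsolated (hT : ∀ t ∈ T, ∀ v, ¬ G.Adj t v) (c : {c // c ∉ T}) :
    TSVert G (#T + 1) :=
  ⟨insert c.1 T, card_insert_of_notMem c.2, isIndep_insert_of_isolated hT c⟩

lemma insertIsolated_injective (hT : ∀ t ∈ T, ∀ v, ¬ G.Adj t v) :
    Function.Injective (insertIsolated hT) := fun c d hcd => by
  have hc : c.1 ∈ insert d.1 T := by
    rw [← show insert c.1 T = insert d.1 T from congrArg Subtype.val hcd]
    exact mem_insert_self c.1 T
  exact Subtype.ext ((mem_insert.mp hc).resolve_right c.2)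

lemma insertIsolated_surjective (hT : ∀ t ∈ T, ∀ v, ¬ G.Adj t v)
    (hclique : ∀ u v, u ∉ T → v ∉ T → u ≠ v → G.Adj u v) :
    Function.Surjective (insertIsolated hT) := fun J => by
  obtain ⟨c, hc, hJ⟩ := exists_eq_insert_of_isIndep hclique J.2.2 J.2.1
  exact ⟨⟨c, hc⟩, Subtype.ext hJ.symm⟩

lemma tsk_adj_insertIsolated (hT : ∀ t ∈ T, ∀ v, ¬ G.Adj t v)
    (hclique : ∀ u v, u ∉ T → v ∉ T → u ≠ v → G.Adj u v) {c d : {c // c ∉ T}} :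
    (TSk G (#T + 1)).Adj (insertIsolated hT c) (insertIsolated hT d) ↔ c ≠ d := by
  refine ⟨fun h hcd => (TSk G _).ne_of_adj h (congrArg _ hcd), fun hcd => ?_⟩
  have hcd' : c.1 ≠ d.1 := fun h => hcd (Subtype.ext h)
  refine (fromRel_adj _ _ _).mpr ⟨(insertIsolated_injective hT).ne hcd,
    Or.inl ⟨c, d, ?_, ?_, hclique c d c.2 d.2 hcd'⟩⟩
  · exact insert_sdiff_insert_of_notMem c.2 hcd'
  · exact insert_sdiff_insert_of_notMem d.2 hcd'.symm

noncomputable def tskIsoTopOfIsolatedOfClique (hT : ∀ t ∈ T, ∀ v, ¬ G.Adj t v)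
    (hclique : ∀ u v, u ∉ T → v ∉ T → u ≠ v → G.Adj u v) {k : ℕ} (hk : #T + 1 = k) :
    (⊤ : SimpleGraph {c // c ∉ T}) ≃g TSk G k := by
  subst hk
  exact ⟨Equiv.ofBijective _ ⟨insertIsolated_injective hT, insertIsolated_surjective hT hclique⟩,
    tsk_adj_insertIsolated hT hclique⟩

end CliqueWithIsolatedVertices

lemma Fin.card_filter_le_val (m n : ℕ) : #{x : Fin m | n ≤ x.val} = m - n := by
  have h := card_filter_add_card_filter_not (s := (univ : Finset (Fin m))) (p := (·.val < n))
  simp only [not_lt, Fin.card_filter_val_lt, card_univ, Fintype.card_fin] at h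
  omega

theorem stmt4_general (k n : ℕ) (hk : 2 ≤ k) :
    ∃ G : SimpleGraph (Fin (n + k - 1)),
      Nonempty (TSk G k ≃g (⊤ : SimpleGraph (Fin n))) := by
  let T : Finset (Fin (n + k - 1)) := {x | n ≤ x.val}
  let G : SimpleGraph (Fin (n + k - 1)) := fromRel fun u v => u ∉ T ∧ v ∉ T
  have hT : ∀ t ∈ T, ∀ v, ¬ G.Adj t v := fun t ht v h => by
    rcases ((fromRel_adj _ t v).mp h).2 with h | h
    exacts [h.1 ht, h.2 ht]
  have hclique : ∀ u v, u ∉ T → v ∉ T → u ≠ v → G.Adj u v := fun u v hu hv huv =>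
    (fromRel_adj _ u v).mpr ⟨huv, Or.inl ⟨hu, hv⟩⟩
  have hTcard : #T + 1 = k := by
    rw [Fin.card_filter_le_val]
    omega
  have hcliqueCard : Fintype.card {c // c ∉ T} = n := by
    rw [Fintype.card_subtype_compl, Fintype.card_coe, Fin.card_filter_le_val, Fintype.card_fin]
    omega
  exact ⟨G, ⟨(tskIsoTopOfIsolatedOfClique hT hclique hTcard).symm.trans
    (Iso.completeGraph (Fintype.equivFinOfCardEq hcliqueCard))⟩⟩

/-- For all `k ≥ 2` and `n ≥ 2` there is a graph `G` on `n + k - 1` vertices with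
`TS_k(G)` isomorphic to the complete graph `K_n`. -/
theorem stmt4 (k n : ℕ) (hk : 2 ≤ k) (hn : 2 ≤ n) :
    ∃ G : SimpleGraph (Fin (n + k - 1)),
      Nonempty (TSk G k ≃g (⊤ : SimpleGraph (Fin n))) :=
  stmt4_general k n hk
end

section
/- For all integers k ≥ 2 and n ≥ 1, the path P_n is a TS_k-reconfiguration graph; i.e., there exists a graph G with TS_k(G) isomorphic to P_n. -/
/-!
Take the complement of the path `P_{n+1}` together with `k - 2` isolated vertices. An independent
set of the complement is a clique of `P_{n+1}`, so it has at most two vertices, and two of them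
form an edge `{i, i+1}` of the path. Hence a size-`k` independent set is all isolated vertices
plus one edge of `P_{n+1}`; the isolated tokens can never move, and a slide turns `{i, i+1}` into
`{i+1, i+2}` (the slide `i → i+2` is an edge of the complement). So `TS_k` is the line graph of
`P_{n+1}`, that is `P_n`.
-/

open SimpleGraph

open Finset

lemma Finset.map_eq_singleton_iff {α γ : Type*} {f : α ↪ γ} {s : Finset α} {x : γ} :
    s.map f = {x} ↔ ∃ a, s = {a} ∧ f a = x := by
  constructor
  · intro h
    obtain ⟨a, -, rfl⟩ := mem_map.1 (h ▸ mem_singleton_self x)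
    exact ⟨a, by rwa [← map_singleton, map_inj] at h, rfl⟩
  · rintro ⟨a, rfl, rfl⟩
    exact map_singleton f a

section ReconfigurationGraph

variable {α β : Type*}

lemma isIndep_iff_isIndepSet {G : SimpleGraph α} {s : Finset α} :
    IsIndep G s ↔ G.IsIndepSet (s : Set α) :=
  ⟨fun h _ hx _ hy _ => h _ hx _ hy, fun h _ hx _ hy hxy => h hx hy (G.ne_of_adj hxy) hxy⟩

lemma isIndep_sum_bot_iff {G : SimpleGraph α} {u : Finset (α ⊕ β)} :
    IsIndep (G ⊕g (⊥ : SimpleGraph β)) u ↔ IsIndep G u.toLeft := by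
  simp [IsIndep, Sum.forall]

lemma TSk_adj [DecidableEq α] {G : SimpleGraph α} {k : ℕ} {I J : TSVert G k} :
    (TSk G k).Adj I J ↔ ∃ u v, I.1 \ J.1 = {u} ∧ J.1 \ I.1 = {v} ∧ G.Adj u v := by
  rw [TSk, fromRel_adj]
  constructor
  · rintro ⟨-, h | ⟨u, v, hu, hv, huv⟩⟩
    · exact h
    · exact ⟨v, u, hv, hu, huv.symm⟩
  · refine fun h => ⟨?_, Or.inl h⟩
    rintro rfl
    obtain ⟨u, -, hu, -⟩ := h
    simp at hu

end ReconfigurationGraph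

section Padding

variable {α β : Type*} [Fintype β]

lemma toRight_eq_univ_of_isIndep_sum_bot {G : SimpleGraph α} {k : ℕ}
    (hG : ∀ s, IsIndep G s → #s ≤ k) {u : Finset (α ⊕ β)}
    (hu : IsIndep (G ⊕g (⊥ : SimpleGraph β)) u) (hcard : #u = k + Fintype.card β) :
    #u.toLeft = k ∧ u.toRight = univ := by
  have hleft := hG _ (isIndep_sum_bot_iff.1 hu)
  have hright := card_le_univ u.toRight
  have hsum := card_toLeft_add_card_toRight (u := u)
  exact ⟨by omega, eq_univ_of_card _ (by omega)⟩

variable [DecidableEq α] [DecidableEq β]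

lemma disjSum_univ_sdiff_disjSum_univ (s t : Finset α) :
    s.disjSum (univ : Finset β) \ t.disjSum univ = (s \ t).map .inl := by
  ext (x | x) <;> simp

noncomputable def TSk.sumBotIso (G : SimpleGraph α) {k : ℕ} (hG : ∀ s, IsIndep G s → #s ≤ k) :
    TSk G k ≃g TSk (G ⊕g (⊥ : SimpleGraph β)) (k + Fintype.card β) where
  toFun s := ⟨s.1.disjSum univ, by simp [card_disjSum, s.2.1],
    isIndep_sum_bot_iff.2 (by simpa using s.2.2)⟩
  invFun u := ⟨u.1.toLeft, (toRight_eq_univ_of_isIndep_sum_bot hG u.2.2 u.2.1).1,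
    isIndep_sum_bot_iff.1 u.2.2⟩
  left_inv s := Subtype.ext (toLeft_disjSum ..)
  right_inv u := Subtype.ext <| by
    change u.1.toLeft.disjSum univ = u.1
    rw [← (toRight_eq_univ_of_isIndep_sum_bot hG u.2.2 u.2.1).2, toLeft_disjSum_toRight]
  map_rel_iff' {s t} := by
    simp only [Equiv.coe_fn_mk, TSk_adj, disjSum_univ_sdiff_disjSum_univ, map_eq_singleton_iff]
    constructor
    · rintro ⟨-, -, ⟨a, hst, rfl⟩, ⟨b, hts, rfl⟩, hab⟩
      exact ⟨a, b, hst, hts, sum_adj_inl.1 hab⟩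
    · rintro ⟨a, b, hst, hts, hab⟩
      exact ⟨_, _, ⟨a, hst, rfl⟩, ⟨b, hts, rfl⟩, sum_adj_inl.2 hab⟩

end Padding

section ComplementOfPath

variable {n : ℕ}

def pathEdge (i : Fin n) : Finset (Fin (n + 1)) := {i.castSucc, i.succ}

lemma mem_pathEdge {i : Fin n} {x : Fin (n + 1)} :
    x ∈ pathEdge i ↔ x.val = i.val ∨ x.val = i.val + 1 := by
  simp [pathEdge, Fin.ext_iff]

lemma card_pathEdge (i : Fin n) : #(pathEdge i) = 2 :=
  card_pair (by simp [Fin.ext_iff])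

lemma pathEdge_injective : Function.Injective (pathEdge (n := n)) := by
  intro i j h
  have h₁ := mem_pathEdge.1 (h ▸ mem_pathEdge.2 (Or.inl rfl) : i.castSucc ∈ pathEdge j)
  have h₂ := mem_pathEdge.1 (h ▸ mem_pathEdge.2 (Or.inr rfl) : i.succ ∈ pathEdge j)
  simp only [Fin.val_castSucc, Fin.val_succ] at h₁ h₂
  exact Fin.ext (by omega)

lemma exists_pathEdge_eq {a b : Fin (n + 1)} (h : (pathGraph (n + 1)).Adj a b) :
    ∃ i, pathEdge i = {a, b} := by
  rcases pathGraph_adj.1 h with h | h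
  · exact ⟨⟨a, by omega⟩, by ext x; simp [mem_pathEdge, Fin.ext_iff]; omega⟩
  · exact ⟨⟨b, by omega⟩, by ext x; simp [mem_pathEdge, Fin.ext_iff]; omega⟩

lemma card_le_two_of_isIndep_compl_pathGraph {s : Finset (Fin (n + 1))}
    (hs : IsIndep (pathGraph (n + 1))ᶜ s) : #s ≤ 2 :=
  ((isIndepSet_compl _).1 (isIndep_iff_isIndepSet.1 hs)).card_le_of_coloring
    (pathGraph.bicoloring _)

lemma isIndep_compl_pathEdge (i : Fin n) : IsIndep (pathGraph (n + 1))ᶜ (pathEdge i) := by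
  rw [isIndep_iff_isIndepSet, isIndepSet_compl, pathEdge, coe_pair, isClique_pair]
  exact fun _ => pathGraph_adj.2 (Or.inl (by simp))

def pathEdgeVert (i : Fin n) : TSVert (pathGraph (n + 1))ᶜ 2 :=
  ⟨pathEdge i, card_pathEdge i, isIndep_compl_pathEdge i⟩

lemma pathEdgeVert_bijective : Function.Bijective (pathEdgeVert (n := n)) := by
  refine ⟨fun i j h => pathEdge_injective (congrArg Subtype.val h), ?_⟩
  rintro ⟨s, hcard, hs⟩
  obtain ⟨a, b, hab, rfl⟩ := card_eq_two.1 hcard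
  rw [isIndep_iff_isIndepSet, isIndepSet_compl, coe_pair, isClique_pair] at hs
  obtain ⟨i, hi⟩ := exists_pathEdge_eq (hs hab)
  exact ⟨i, Subtype.ext hi⟩

lemma TSk_adj_pathEdgeVert_of_succ {i j : Fin n} (h : i.val + 1 = j.val) :
    (TSk (pathGraph (n + 1))ᶜ 2).Adj (pathEdgeVert i) (pathEdgeVert j) := by
  refine TSk_adj.2 ⟨i.castSucc, j.succ, ?_, ?_, ?_⟩
  · ext x; simp [pathEdgeVert, mem_pathEdge, Fin.ext_iff]; omega
  · ext x; simp [pathEdgeVert, mem_pathEdge, Fin.ext_iff]; omega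
  · simp [pathGraph_adj, Fin.ext_iff]; omega

lemma pathGraph_adj_of_TSk_adj {i j : Fin n}
    (h : (TSk (pathGraph (n + 1))ᶜ 2).Adj (pathEdgeVert i) (pathEdgeVert j)) :
    (pathGraph n).Adj i j := by
  obtain ⟨u, -, hu, -, -⟩ := TSk_adj.1 h
  change pathEdge i \ pathEdge j = {u} at hu
  -- the kept token lies on both edges, the moved one `u` only on the first
  obtain ⟨x, hx⟩ : (pathEdge i ∩ pathEdge j).Nonempty := by
    have hcard := card_sdiff_add_card_inter (pathEdge i) (pathEdge j)
    rw [hu, card_singleton, card_pathEdge] at hcard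
    exact card_pos.1 (by omega)
  have hu' := mem_sdiff.1 (hu ▸ mem_singleton_self u)
  simp only [mem_inter, mem_pathEdge] at hx hu'
  exact pathGraph_adj.2 (by omega)

noncomputable def TSk.complPathGraphIso (n : ℕ) : pathGraph n ≃g TSk (pathGraph (n + 1))ᶜ 2 where
  toEquiv := Equiv.ofBijective _ pathEdgeVert_bijective
  map_rel_iff' {i j} := by
    refine ⟨pathGraph_adj_of_TSk_adj, fun h => ?_⟩
    rcases pathGraph_adj.1 h with h | h
    · exact TSk_adj_pathEdgeVert_of_succ h
    · exact (TSk_adj_pathEdgeVert_of_succ h).symm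

end ComplementOfPath

theorem stmt5_general (k n : ℕ) (hk : 2 ≤ k) :
    ∃ (W : Type) (_ : Fintype W) (dW : DecidableEq W) (G : SimpleGraph W),
      Nonempty ((@TSk W dW G k) ≃g SimpleGraph.pathGraph n) := by
  obtain ⟨m, rfl⟩ : ∃ m, k = 2 + Fintype.card (Fin m) := ⟨k - 2, by simp; omega⟩
  exact ⟨Fin (n + 1) ⊕ Fin m, inferInstance, inferInstance, (pathGraph (n + 1))ᶜ ⊕g ⊥,
    ⟨((TSk.complPathGraphIso n).trans
      (TSk.sumBotIso _ fun _ => card_le_two_of_isIndep_compl_pathGraph)).symm⟩⟩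

/-- For all `k ≥ 2` and `n ≥ 1`, the path `P_n` is a `TS_k`-reconfiguration graph. -/
theorem stmt5 (k n : ℕ) (hk : 2 ≤ k) (hn : 1 ≤ n) :
    ∃ (W : Type) (_ : Fintype W) (dW : DecidableEq W) (G : SimpleGraph W),
      Nonempty ((@TSk W dW G k) ≃g SimpleGraph.pathGraph n) :=
  stmt5_general k n hk
end

section
/- For all integers k ≥ 2 and n ≥ 3, the cycle C_n is a TS_k-reconfiguration graph; i.e., there exists a graph G with TS_k(G) isomorphic to C_n. -/
open SimpleGraph Finset Sum

lemma tsk_iso {V : Type} [DecidableEq V] (G : SimpleGraph V) (k n : ℕ)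
    (f : Fin n → Finset V)
    (hc : ∀ i, (f i).card = k) (hi : ∀ i, IsIndep G (f i))
    (hinj : Function.Injective f)
    (hsurj : ∀ I : Finset V, I.card = k → IsIndep G I → ∃ i, I = f i)
    (hadj : ∀ i j : Fin n, i ≠ j →
      ((∃ u v, f i \ f j = {u} ∧ f j \ f i = {v} ∧ G.Adj u v) ↔ (cycleGraph n).Adj i j)) :
    Nonempty (TSk G k ≃g cycleGraph n) := by
  let g : Fin n → TSVert G k := fun i => ⟨f i, hc i, hi i⟩
  have hbij : Function.Bijective g := by
    constructor
    · intro i j h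
      exact hinj (congrArg Subtype.val h)
    · rintro ⟨I, hIc, hIi⟩
      obtain ⟨i, rfl⟩ := hsurj I hIc hIi
      exact ⟨i, rfl⟩
  let e : Fin n ≃ TSVert G k := Equiv.ofBijective g hbij
  refine ⟨RelIso.symm ⟨e, ?_⟩⟩
  intro i j
  show (TSk G k).Adj (g i) (g j) ↔ (cycleGraph n).Adj i j
  by_cases hij : i = j
  · subst hij; simp [(TSk G k).irrefl, (cycleGraph n).irrefl]
  · rw [TSk, fromRel_adj]
    constructor
    · rintro ⟨-, h | h⟩
      · exact (hadj i j hij).1 h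
      · obtain ⟨u, v, h1, h2, h3⟩ := h
        exact (hadj i j hij).1 ⟨v, u, h2, h1, h3.symm⟩
    · intro h
      refine ⟨fun hg => hij (hinj (congrArg Subtype.val hg)), Or.inl ((hadj i j hij).2 h)⟩

section c3
variable (p : ℕ)

def RR (q p : ℕ) : Finset (Fin q ⊕ Fin p) := univ.map ⟨inr, inr_injective⟩

@[simp] lemma mem_RR {q p : ℕ} (a : Fin q ⊕ Fin p) : a ∈ RR q p ↔ a.isRight := by
  cases a <;> simp [RR]

def G3 (p : ℕ) : SimpleGraph (Fin 3 ⊕ Fin (p+1)) :=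
  fromRel (fun a b => a.isLeft ∧ b.isLeft)

lemma G3_adj {p : ℕ} (a b : Fin 3 ⊕ Fin (p+1)) :
    (G3 p).Adj a b ↔ a ≠ b ∧ a.isLeft ∧ b.isLeft := by
  constructor
  · rintro ⟨h, ⟨h1, h2⟩ | ⟨h1, h2⟩⟩ <;> exact ⟨h, by tauto⟩
  · rintro ⟨h, h1, h2⟩; exact ⟨h, Or.inl ⟨h1, h2⟩⟩

def f3 (p : ℕ) (i : Fin 3) : Finset (Fin 3 ⊕ Fin (p+1)) := insert (inl i) (RR 3 (p+1))

lemma c3 (p : ℕ) : Nonempty (TSk (G3 p) (p+2) ≃g cycleGraph 3) := by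
  apply tsk_iso (G3 p) (p+2) 3 (f3 p)
  · intro i
    rw [f3, card_insert_of_notMem (by simp)]
    simp [RR]
  · intro i u hu v hv hadj
    rw [G3_adj] at hadj
    simp only [f3, mem_insert, mem_RR] at hu hv
    rcases hu with rfl | hu
    · rcases hv with rfl | hv
      · exact hadj.1 rfl
      · cases v <;> simp_all
    · cases u <;> simp_all
  · intro i j h
    have : inl i ∈ f3 p j := h ▸ (by simp [f3])
    simpa [f3] using this
  · intro I hcard hind
    set L := I.toLeft with hL
    have hL1 : L.card ≤ 1 := by
      rw [card_le_one]
      intro a ha b hb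
      by_contra hab
      rw [hL, mem_toLeft] at ha hb
      exact hind (inl a) ha (inl b) hb
        ((G3_adj _ _).2 ⟨by simpa using hab, rfl, rfl⟩)
    have hR1 : I.toRight.card ≤ p + 1 := by
      simpa using card_le_univ I.toRight
    have hsum : L.card + I.toRight.card = p + 2 := by
      rw [hL]; rw [card_toLeft_add_card_toRight]; exact hcard
    have hLc : L.card = 1 := by omega
    obtain ⟨x, hx⟩ := card_eq_one.1 hLc
    have hRc : I.toRight = univ := eq_univ_of_card _ (by rw [Fintype.card_fin]; omega)
    refine ⟨x, ?_⟩
    ext a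
    cases a with
    | inl y =>
        have h1 : (inl y ∈ I) ↔ y = x := by rw [← mem_toLeft, ← hL, hx, mem_singleton]
        rw [h1]
        simp [f3]
    | inr b =>
        have : b ∈ I.toRight := hRc ▸ mem_univ b
        simp only [mem_toRight] at this
        simp [f3, this]
  · intro i j hij
    have hdiff : ∀ i j : Fin 3, i ≠ j → f3 p i \ f3 p j = {inl i} := by
      intro i j hij
      ext a
      simp only [f3, mem_sdiff, mem_insert, mem_RR, mem_singleton]
      cases a with
      | inl y =>
          simp only [isRight_inl, Bool.false_eq_true, or_false, Sum.inl.injEq]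
          exact ⟨fun h => h.1, fun h => ⟨h, fun hj => hij (h.symm.trans hj)⟩⟩
      | inr b => simp
    rw [hdiff i j hij, hdiff j i (Ne.symm hij)]
    constructor
    · intro _
      rw [cycleGraph_three_eq_top]
      simpa using hij
    · intro _
      exact ⟨inl i, inl j, rfl, rfl, (G3_adj _ _).2 ⟨by simpa using hij, rfl, rfl⟩⟩
end c3

lemma card_RR (q p : ℕ) : (RR q p).card = p := by simp [RR]

-- Fin arithmetic facts
theorem fin1 (m : ℕ) : ((1:Fin (m+4))) ≠ 0 := by
  rw [ne_eq, Fin.ext_iff]; simp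
theorem fin2 (m : ℕ) : ((1:Fin (m+4))+1) ≠ 0 := by
  rw [ne_eq, Fin.ext_iff, Fin.add_def]
  simp only [Fin.val_one, Fin.val_zero]
  rw [Nat.mod_eq_of_lt (by omega)]; omega
theorem fin3 (m : ℕ) : ((1:Fin (m+4))+1+1) ≠ 0 := by
  have h2 : ((1:Fin (m+4))+1).val = 2 := by
    rw [Fin.add_def]; simp only [Fin.val_one]; exact Nat.mod_eq_of_lt (by omega)
  rw [ne_eq, Fin.ext_iff, Fin.add_def, h2]
  simp only [Fin.val_one, Fin.val_zero]
  rw [Nat.mod_eq_of_lt (by omega)]; omega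

theorem ne1 {m : ℕ} (i : Fin (m+4)) : i + 1 ≠ i := by
  rw [ne_eq, add_eq_left]; exact fin1 m
theorem ne2 {m : ℕ} (i : Fin (m+4)) : i + 1 + 1 ≠ i := by
  rw [add_assoc, ne_eq, add_eq_left]; exact fin2 m
theorem ne3 {m : ℕ} (i : Fin (m+4)) : i + 1 + 1 + 1 ≠ i := by
  rw [add_assoc, add_assoc, ← add_assoc (1:Fin (m+4)), ne_eq, add_eq_left]; exact fin3 m

def G4 (m p : ℕ) : SimpleGraph (Fin (m+4) ⊕ Fin p) :=
  fromRel (fun a b => ∃ x y, a = inl x ∧ b = inl y ∧ x ≠ y + 1 ∧ y ≠ x + 1)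

lemma G4_adj {m p : ℕ} (a b : Fin (m+4) ⊕ Fin p) :
    (G4 m p).Adj a b ↔ ∃ x y, a = inl x ∧ b = inl y ∧ x ≠ y ∧ x ≠ y + 1 ∧ y ≠ x + 1 := by
  rw [G4, fromRel_adj]
  constructor
  · rintro ⟨hne, ⟨x, y, rfl, rfl, h1, h2⟩ | ⟨x, y, rfl, rfl, h1, h2⟩⟩
    · exact ⟨x, y, rfl, rfl, by simpa using hne, h1, h2⟩
    · exact ⟨y, x, rfl, rfl, by simpa using hne, h2, h1⟩
  · rintro ⟨x, y, rfl, rfl, h0, h1, h2⟩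
    exact ⟨by simpa using h0, Or.inl ⟨x, y, rfl, rfl, h1, h2⟩⟩

def f4 (m p : ℕ) (i : Fin (m+4)) : Finset (Fin (m+4) ⊕ Fin p) :=
  insert (inl i) (insert (inl (i+1)) (RR (m+4) p))

lemma mem_f4 {m p : ℕ} (a : Fin (m+4) ⊕ Fin p) (i : Fin (m+4)) :
    a ∈ f4 m p i ↔ a = inl i ∨ a = inl (i+1) ∨ a.isRight := by
  simp [f4]

lemma mem_f4_inl {m p : ℕ} (w i : Fin (m+4)) :
    (inl w : Fin (m+4) ⊕ Fin p) ∈ f4 m p i ↔ w = i ∨ w = i + 1 := by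
  simp [f4]

lemma cyc_adj {m : ℕ} (i j : Fin (m+4)) :
    (cycleGraph (m+4)).Adj i j ↔ i = j + 1 ∨ j = i + 1 := by
  rw [show (cycleGraph (m+4)).Adj i j ↔ i - j = 1 ∨ j - i = 1 from cycleGraph_adj (n := m+2),
    sub_eq_iff_eq_add, sub_eq_iff_eq_add, add_comm (1:Fin (m+4)) j, add_comm (1:Fin (m+4)) i]

lemma dif1 {m p : ℕ} (i : Fin (m+4)) : f4 m p i \ f4 m p (i+1) = {inl i} := by
  ext a
  cases a with
  | inr b => simp [mem_f4]
  | inl w =>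
    simp only [mem_sdiff, mem_f4_inl, mem_singleton, Sum.inl.injEq]
    constructor
    · rintro ⟨rfl | rfl, h2⟩
      · rfl
      · exact absurd (Or.inl rfl) h2
    · rintro rfl
      exact ⟨Or.inl rfl, by rintro (h | h); exacts [ne1 w h.symm, ne2 w h.symm]⟩

lemma dif2 {m p : ℕ} (i : Fin (m+4)) : f4 m p (i+1) \ f4 m p i = {inl (i+1+1)} := by
  ext a
  cases a with
  | inr b => simp [mem_f4]
  | inl w =>
    simp only [mem_sdiff, mem_f4_inl, mem_singleton, Sum.inl.injEq]
    constructor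
    · rintro ⟨rfl | rfl, h2⟩
      · exact absurd (Or.inr rfl) h2
      · rfl
    · rintro rfl
      refine ⟨Or.inr rfl, ?_⟩
      rintro (h | h)
      · exact ne2 i h
      · exact ne1 i (add_right_cancel h)

lemma adjA {m p : ℕ} (i : Fin (m+4)) :
    (G4 m p).Adj (inl i) (inl (i+1+1)) :=
  (G4_adj _ _).2 ⟨i, i+1+1, rfl, rfl, fun h => ne2 i h.symm, fun h => ne3 i h.symm,
    fun h => ne1 i (add_right_cancel h)⟩

lemma c4 (m p : ℕ) : Nonempty (TSk (G4 m p) (p+2) ≃g cycleGraph (m+4)) := by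
  apply tsk_iso (G4 m p) (p+2) (m+4) (f4 m p)
  · intro i
    have hm1 : (inl (i+1) : Fin (m+4) ⊕ Fin p) ∉ RR (m+4) p := by simp
    have hm2 : (inl i : Fin (m+4) ⊕ Fin p) ∉ insert (inl (i+1)) (RR (m+4) p) := by
      simp only [mem_insert, mem_RR, Sum.inl.injEq]
      rintro (h | h)
      · exact ne1 i h.symm
      · simp at h
    rw [f4, card_insert_of_notMem hm2, card_insert_of_notMem hm1, card_RR]
  · intro i u hu v hv hadj
    rw [G4_adj] at hadj
    obtain ⟨x, y, rfl, rfl, h0, h1, h2⟩ := hadj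
    rw [mem_f4_inl] at hu hv
    rcases hu with rfl | rfl <;> rcases hv with rfl | rfl
    · exact h0 rfl
    · exact h2 rfl
    · exact h1 rfl
    · exact h0 rfl
  · intro i j h
    have hi : (inl i : Fin (m+4) ⊕ Fin p) ∈ f4 m p j := by
      rw [← h, mem_f4_inl]; exact Or.inl rfl
    have hj : (inl j : Fin (m+4) ⊕ Fin p) ∈ f4 m p i := by
      rw [h, mem_f4_inl]; exact Or.inl rfl
    rw [mem_f4_inl] at hi hj
    rcases hi with hi | hi
    · exact hi
    rcases hj with hj | hj
    · exact hj.symm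
    rw [hj] at hi
    exact absurd hi.symm (ne2 i)
  · intro I hcard hind
    have hpair : ∀ x ∈ I.toLeft, ∀ y ∈ I.toLeft, x ≠ y → y = x + 1 ∨ x = y + 1 := by
      intro x hx y hy hxy
      rw [mem_toLeft] at hx hy
      have hna := hind _ hx _ hy
      rw [G4_adj] at hna
      by_contra hcon
      push_neg at hcon
      exact hna ⟨x, y, rfl, rfl, hxy, hcon.2, hcon.1⟩
    have hL2 : I.toLeft.card ≤ 2 := by
      by_contra hgt
      obtain ⟨a, ha, b, hb, c, hc, hab, hac, hbc⟩ := (two_lt_card (s := I.toLeft)).1 (by omega)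
      rcases hpair a ha b hb hab with hb1 | hb1 <;>
        rcases hpair a ha c hc hac with hc1 | hc1 <;>
          rcases hpair b hb c hc hbc with hd1 | hd1
      · exact hbc (hb1.trans hc1.symm)
      · exact hbc (hb1.trans hc1.symm)
      · rw [hb1] at hd1; rw [hd1] at hc1
        exact ne3 a hc1.symm
      · exact hab (hc1.trans hd1.symm)
      · exact hab (add_right_cancel (hc1.symm.trans hd1))
      · rw [hb1] at hc1; rw [hc1] at hd1
        exact ne3 b hd1.symm
      · exact hbc (add_right_cancel (hb1.symm.trans hc1))
      · exact hbc (add_right_cancel (hb1.symm.trans hc1))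
    have hsum : I.toLeft.card + I.toRight.card = p + 2 := by
      rw [card_toLeft_add_card_toRight]; exact hcard
    have hRle : I.toRight.card ≤ p := by simpa using card_le_univ I.toRight
    have hLc : I.toLeft.card = 2 := by omega
    have hRc : I.toRight = univ := eq_univ_of_card _ (by rw [Fintype.card_fin]; omega)
    obtain ⟨x, y, hxy, hxyL⟩ := card_eq_two.1 hLc
    have hxL : x ∈ I.toLeft := by rw [hxyL]; simp
    have hyL : y ∈ I.toLeft := by rw [hxyL]; simp
    have hz : ∃ z, I.toLeft = {z, z + 1} := by
      rcases hpair x hxL y hyL hxy with h | h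
      · exact ⟨x, by rw [hxyL, h]⟩
      · exact ⟨y, by rw [hxyL, h, pair_comm]⟩
    obtain ⟨z, hzL⟩ := hz
    refine ⟨z, ?_⟩
    ext a
    cases a with
    | inl w =>
      rw [mem_f4_inl, ← mem_toLeft, hzL, mem_insert, mem_singleton]
    | inr b =>
      have hb : inr b ∈ I := mem_toRight.1 (hRc ▸ mem_univ b)
      simp [mem_f4, hb]
  · intro i j hij
    rw [cyc_adj]
    constructor
    · rintro ⟨u, v, hd1, hd2, -⟩
      by_contra hcyc
      push_neg at hcyc
      have h1 : (inl i : Fin (m+4) ⊕ Fin p) ∈ f4 m p i \ f4 m p j := by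
        rw [mem_sdiff, mem_f4_inl, mem_f4_inl]
        exact ⟨Or.inl rfl, by rintro (rfl | h); exacts [hij rfl, hcyc.1 h]⟩
      have h2 : (inl (i+1) : Fin (m+4) ⊕ Fin p) ∈ f4 m p i \ f4 m p j := by
        rw [mem_sdiff, mem_f4_inl, mem_f4_inl]
        refine ⟨Or.inr rfl, ?_⟩
        rintro (h | h)
        · exact hcyc.2 h.symm
        · exact hij (add_right_cancel h)
      rw [hd1, mem_singleton] at h1 h2
      exact ne1 i (by simpa using h2.trans h1.symm)
    · rintro (rfl | rfl)
      · exact ⟨inl (j+1+1), inl j, dif2 j, dif1 j, (adjA j).symm⟩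
      · exact ⟨inl i, inl (i+1+1), dif1 i, dif2 i, adjA i⟩

/-- For all `k ≥ 2` and `n ≥ 3`, the cycle `C_n` is a `TS_k`-reconfiguration graph. -/
theorem stmt6 (k n : ℕ) (hk : 2 ≤ k) (hn : 3 ≤ n) :
    ∃ (W : Type) (_ : Fintype W) (dW : DecidableEq W) (G : SimpleGraph W),
      Nonempty ((@TSk W dW G k) ≃g SimpleGraph.cycleGraph n) := by
  obtain ⟨p, rfl⟩ : ∃ p, k = p + 2 := ⟨k - 2, by omega⟩
  rcases eq_or_lt_of_le hn with h3 | h4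
  · obtain rfl := h3.symm
    exact ⟨Fin 3 ⊕ Fin (p+1), inferInstance, inferInstance, G3 p, c3 p⟩
  · obtain ⟨m, rfl⟩ : ∃ m, n = m + 4 := ⟨n - 4, by omega⟩
    exact ⟨Fin (m+4) ⊕ Fin p, inferInstance, inferInstance, G4 m p, c4 m p⟩
end

section
/- Let I be an independent set of a graph G with |I| = k − 1, and let G' be obtained from G by adding a new vertex v adjacent to every vertex of V(G) \ I. Then TS_k(G') is obtained from TS_k(G) by adding the single new node I ∪ {v} together with all edges incident to it; in particular, I ∪ {v} is the unique size-k independent set of G' containing v. -/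
open SimpleGraph

/-- The graph `G'` obtained from `G` by adding a new vertex (`none`) joined to every vertex
of `G` outside `I`. -/
def addVert {V : Type*} (G : SimpleGraph V) (I : Finset V) : SimpleGraph (Option V) :=
  SimpleGraph.fromRel (fun x y =>
    (∃ a b, x = some a ∧ y = some b ∧ G.Adj a b) ∨
    (∃ a, x = none ∧ y = some a ∧ a ∉ I))

lemma addVert_adj_some {V : Type*} {G : SimpleGraph V} {I : Finset V} {a b : V} :
    (addVert G I).Adj (some a) (some b) ↔ G.Adj a b := by
  simp [addVert, fromRel_adj]
  constructor
  · rintro ⟨hne, h | h⟩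
    · exact h
    · exact h.symm
  · intro h
    exact ⟨h.ne, Or.inl h⟩

lemma addVert_adj_none {V : Type*} {G : SimpleGraph V} {I : Finset V} {a : V} :
    (addVert G I).Adj none (some a) ↔ a ∉ I := by
  simp [addVert, fromRel_adj]

lemma image_some_indep {V : Type*} [DecidableEq V] {G : SimpleGraph V} {I J : Finset V}
    (h : IsIndep G J) : IsIndep (addVert G I) (J.image some) := by
  intro u hu v hv
  simp only [Finset.mem_image] at hu hv
  obtain ⟨a, ha, rfl⟩ := hu
  obtain ⟨b, hb, rfl⟩ := hv
  rw [addVert_adj_some]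
  exact h a ha b hb

lemma rel_image_iff {V : Type*} [DecidableEq V] {G : SimpleGraph V} {I A B : Finset V} :
    (∃ u v, A.image some \ B.image some = {u} ∧ B.image some \ A.image some = {v} ∧
      (addVert G I).Adj u v) ↔
    (∃ u v, A \ B = {u} ∧ B \ A = {v} ∧ G.Adj u v) := by
  have hinj : Function.Injective (some : V → Option V) := Option.some_injective V
  constructor
  · rintro ⟨u, v, hu, hv, huv⟩
    rw [← Finset.image_sdiff _ _ hinj] at hu hv
    obtain ⟨a, ha⟩ : ∃ a, A \ B = {a} := by
      rw [← Finset.card_eq_one, ← Finset.card_image_of_injective _ hinj, hu]; simp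
    obtain ⟨b, hb⟩ : ∃ b, B \ A = {b} := by
      rw [← Finset.card_eq_one, ← Finset.card_image_of_injective _ hinj, hv]; simp
    rw [ha, Finset.image_singleton] at hu
    rw [hb, Finset.image_singleton] at hv
    have hu' : u = some a := (Finset.singleton_injective hu).symm
    have hv' : v = some b := (Finset.singleton_injective hv).symm
    subst hu' hv'
    exact ⟨a, b, ha, hb, addVert_adj_some.mp huv⟩
  · rintro ⟨u, v, hu, hv, huv⟩
    refine ⟨some u, some v, ?_, ?_, addVert_adj_some.mpr huv⟩
    · rw [← Finset.image_sdiff _ _ hinj, hu, Finset.image_singleton]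
    · rw [← Finset.image_sdiff _ _ hinj, hv, Finset.image_singleton]


/-- If `I` is an independent set of `G` with `|I| = k - 1` and `G'` is obtained from `G` by
adding a new vertex adjacent to all of `V(G) \ I`, then `I + v` is the unique size-`k`
independent set of `G'` containing the new vertex, and `TS_k(G')` is `TS_k(G)` together with
this one extra node (and its incident edges). -/
theorem stmt7 {V : Type*} [DecidableEq V] (G : SimpleGraph V) (I : Finset V) (k : ℕ)
    (hI : IsIndep G I) (hcard : I.card + 1 = k) :
    (∀ J : Finset (Option V), J.card = k → IsIndep (addVert G I) J → none ∈ J →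
      J = insert none (I.image some)) ∧
    ∃ f : TSk G k ↪g TSk (addVert G I) k,
      (∀ J : TSVert G k,
        ((f J : TSVert (addVert G I) k) : Finset (Option V)) = (J : Finset V).image some) ∧
      (∀ J' : TSVert (addVert G I) k,
        (∃ J, f J = J') ∨ (J' : Finset (Option V)) = insert none (I.image some)) := by
  have hinj : Function.Injective (some : V → Option V) := Option.some_injective V
  have hnone : none ∉ I.image some := by simp
  have hcardins : (insert none (I.image some)).card = k := by
    rw [Finset.card_insert_of_notMem hnone, Finset.card_image_of_injective _ hinj, hcard]
  have part1 : ∀ J : Finset (Option V), J.card = k → IsIndep (addVert G I) J → none ∈ J →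
      J = insert none (I.image some) := by
    intro J hJcard hJind hnJ
    have hsub : J ⊆ insert none (I.image some) := by
      intro x hx
      match x with
      | none => simp
      | some a =>
        by_contra hc
        have haI : a ∉ I := by
          simp only [Finset.mem_insert, Finset.mem_image] at hc
          push_neg at hc
          intro h; exact hc.2 a h rfl
        exact hJind none hnJ (some a) hx (addVert_adj_none.mpr haI)
    exact Finset.eq_of_subset_of_card_le hsub (by rw [hJcard, hcardins])
  refine ⟨part1, ?_⟩
  let f0 : TSVert G k → TSVert (addVert G I) k := fun J =>
    ⟨(J : Finset V).image some,
      by rw [Finset.card_image_of_injective _ hinj]; exact J.2.1,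
      image_some_indep J.2.2⟩
  have hf0inj : Function.Injective f0 := by
    intro A B h
    have := congrArg (fun x : TSVert (addVert G I) k => (x : Finset (Option V))) h
    exact Subtype.ext (Finset.image_injective hinj this)
  refine ⟨⟨⟨f0, hf0inj⟩, ?_⟩, fun J => rfl, ?_⟩
  · intro A B
    simp only [TSk, fromRel_adj, Function.Embedding.coeFn_mk]
    constructor
    · rintro ⟨hne, h | h⟩
      · exact ⟨fun e => hne (congrArg f0 e), Or.inl (rel_image_iff.mp h)⟩
      · exact ⟨fun e => hne (congrArg f0 e), Or.inr (rel_image_iff.mp h)⟩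
    · rintro ⟨hne, h | h⟩
      · exact ⟨fun e => hne (hf0inj e), Or.inl (rel_image_iff.mpr h)⟩
      · exact ⟨fun e => hne (hf0inj e), Or.inr (rel_image_iff.mpr h)⟩
  · intro J'
    by_cases hn : none ∈ (J' : Finset (Option V))
    · exact Or.inr (part1 _ J'.2.1 J'.2.2 hn)
    · left
      classical
      have hall : ∀ x ∈ (J' : Finset (Option V)), ∃ a, x = some a := by
        intro x hx
        match x with
        | none => exact absurd hx hn
        | some a => exact ⟨a, rfl⟩
      set K : Finset V := (J' : Finset (Option V)).preimage some (hinj.injOn) with hK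
      have himg : K.image some = (J' : Finset (Option V)) := by
        ext x
        simp only [hK, Finset.mem_image, Finset.mem_preimage]
        constructor
        · rintro ⟨a, ha, rfl⟩; exact ha
        · intro hx
          obtain ⟨a, rfl⟩ := hall x hx
          exact ⟨a, hx, rfl⟩
      have hKcard : K.card = k := by
        rw [← J'.2.1, ← himg, Finset.card_image_of_injective _ hinj]
      have hKind : IsIndep G K := by
        intro a ha b hb hab
        have := J'.2.2 (some a) (by rw [← himg]; exact Finset.mem_image_of_mem _ ha)
          (some b) (by rw [← himg]; exact Finset.mem_image_of_mem _ hb)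
        exact this (addVert_adj_some.mpr hab)
      exact ⟨⟨K, hKcard, hKind⟩, Subtype.ext himg⟩
end

section
/- For integers n ≥ m ≥ 1 and k ≥ 2, the complete bipartite graph K_{m,n} is a TS_k-reconfiguration graph if and only if (m = 1 and n ≤ k) or (m = n = 2). -/
open SimpleGraph

/-!
In `TS_k(G)` two neighbours `J₁ = I - u₁ + v`, `J₂ = I - u₂ + v` of `I` receiving the same token
`v` coincide, since otherwise `J₂` contains the edge `u₁v`. If `TS_k(G) ≅ K_{m,n}` and `k ≥ 2`, two
neighbours `I - u + v₁ ≠ I - u + v₂` of `I` cannot remove the same token `u` either: moving a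
second token of `I - u + v₁` onto `v₂` gives an independent set adjacent neither to `I` nor to
`I - u + v₁`, impossible in a complete bipartite graph. So a vertex has at most `k` neighbours,
which rules out `K_{1,n}` for `n > k`. For `m ≥ 2` take `I ≠ I'` on one side and `p ∈ I \ I'`:
passing to a common neighbour, `p` either leaves `I` or enters from `I'`, and each happens for at
most one common neighbour, so `n ≤ 2`. Conversely `K_{1,n}` (`n ≤ k`) and `K_{2,2}` are realised
by explicit graphs.
-/

open Finset

theorem eq_of_sdiff_eq_of_sdiff_eq {α : Type*} [GeneralizedBooleanAlgebra α] {x y z : α}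
    (h₁ : x \ y = x \ z) (h₂ : y \ x = z \ x) : y = z := by
  rw [← sup_sdiff_inf y x, ← sup_sdiff_inf z x, h₂, inf_comm, sdiff_eq_sdiff_iff_inf_eq_inf.1 h₁,
    inf_comm]

namespace Finset

variable {α : Type*} [DecidableEq α] {s : Finset α} {u v : α}

theorem sdiff_insert_erase (hu : u ∈ s) (hv : v ∉ s) : s \ insert v (s.erase u) = {u} := by
  ext x
  by_cases hxu : x = u
  · subst hxu
    simp [hu, ne_of_mem_of_not_mem hu hv]
  · simp +contextual [hxu]

theorem insert_erase_sdiff (hv : v ∉ s) : insert v (s.erase u) \ s = {v} := by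
  ext x
  by_cases hxv : x = v
  · subst hxv
    simp [hv]
  · simp [hxv]

end Finset

theorem IsIndep.mono {V : Type*} {G : SimpleGraph V} {s t : Finset V} (ht : IsIndep G t)
    (hst : s ⊆ t) : IsIndep G s :=
  fun u hu v hv => ht u (hst hu) v (hst hv)

theorem IsIndep.insert {V : Type*} [DecidableEq V] {G : SimpleGraph V} {s : Finset V} {v : V}
    (hs : IsIndep G s) (hv : ∀ x ∈ s, ¬ G.Adj v x) : IsIndep G (insert v s) := by
  intro x hx y hy hxy
  rcases mem_insert.1 hx with rfl | hxs <;> rcases mem_insert.1 hy with rfl | hys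
  · exact G.loopless.irrefl _ hxy
  · exact hv y hys hxy
  · exact hv x hxs hxy.symm
  · exact hs x hxs y hys hxy

namespace SimpleGraph

variable {α β : Type*} {x y z : α ⊕ β}

theorem completeBipartiteGraph_adj_or_adj (h : (completeBipartiteGraph α β).Adj x y)
    (z : α ⊕ β) : (completeBipartiteGraph α β).Adj x z ∨ (completeBipartiteGraph α β).Adj y z := by
  rcases x with a | b <;> rcases y with a' | b' <;> rcases z with c | c <;> simp_all

theorem completeBipartiteGraph_not_adj_of_adj_of_adj (hxy : (completeBipartiteGraph α β).Adj x y)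
    (hxz : (completeBipartiteGraph α β).Adj x z) : ¬ (completeBipartiteGraph α β).Adj y z := by
  rcases x with a | b <;> rcases y with a' | b' <;> rcases z with c | c <;> simp_all

theorem nonempty_iso_completeBipartiteGraph {W : Type*} {H : SimpleGraph W}
    (φ : α ⊕ β → W) (hφ : Function.Bijective φ) (hlr : ∀ a b, H.Adj (φ (.inl a)) (φ (.inr b)))
    (hll : ∀ a a', a ≠ a' → ¬ H.Adj (φ (.inl a)) (φ (.inl a')))
    (hrr : ∀ b b', b ≠ b' → ¬ H.Adj (φ (.inr b)) (φ (.inr b'))) :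
    Nonempty (H ≃g completeBipartiteGraph α β) := by
  refine ⟨Iso.symm ⟨Equiv.ofBijective φ hφ, fun {x y} => ?_⟩⟩
  rcases x with a | b <;> rcases y with a' | b'
  · by_cases h : a = a'
    · subst h
      simp
    · simpa using hll a a' h
  · simpa using hlr a b'
  · simpa using (hlr a' b).symm
  · by_cases h : b = b'
    · subst h
      simp
    · simpa using hrr b b' h

end SimpleGraph

namespace TSk

variable {V : Type*} [DecidableEq V] {G : SimpleGraph V} {k : ℕ} {I I' J J₁ J₂ : TSVert G k}
  {x y : V} {α β : Type*}

theorem adj_iff : (TSk G k).Adj I J ↔ ∃ u v, I.1 \ J.1 = {u} ∧ J.1 \ I.1 = {v} ∧ G.Adj u v := by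
  rw [TSk, fromRel_adj]
  constructor
  · rintro ⟨-, h | ⟨u, v, hu, hv, huv⟩⟩
    exacts [h, ⟨v, u, hv, hu, huv.symm⟩]
  · rintro ⟨u, v, hu, hv, huv⟩
    refine ⟨?_, Or.inl ⟨u, v, hu, hv, huv⟩⟩
    rintro rfl
    simp at hu

theorem adj_of_insert_erase (hx : x ∈ I.1) (hy : y ∉ I.1) (hxy : G.Adj x y)
    (hJ : J.1 = insert y (I.1.erase x)) : (TSk G k).Adj I J :=
  adj_iff.2 ⟨x, y, hJ ▸ sdiff_insert_erase hx hy, hJ ▸ insert_erase_sdiff hy, hxy⟩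

theorem exists_insert_erase_of_adj (h : (TSk G k).Adj I J) :
    ∃ x ∈ I.1, ∃ y ∉ I.1, G.Adj x y ∧ J.1 = insert y (I.1.erase x) := by
  obtain ⟨x, y, hx, hy, hxy⟩ := adj_iff.1 h
  have hxI := mem_sdiff.1 (hx ▸ mem_singleton_self x)
  have hyI := mem_sdiff.1 (hy ▸ mem_singleton_self y)
  refine ⟨x, hxI.1, y, hyI.2, hxy, eq_of_sdiff_eq_of_sdiff_eq (x := I.1) ?_ ?_⟩
  · rw [hx, sdiff_insert_erase hxI.1 hyI.2]
  · rw [hy, insert_erase_sdiff hyI.2]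

theorem sdiff_eq_singleton_of_adj (h : (TSk G k).Adj I J) (hx : x ∈ I.1 \ J.1) :
    I.1 \ J.1 = {x} := by
  obtain ⟨u, v, hu, -, -⟩ := adj_iff.1 h
  rw [hu, mem_singleton.1 (hu ▸ hx : x ∈ ({u} : Finset V))]

theorem not_adj_of_mem_sdiff (hx : x ∈ I.1 \ J.1) (hy : y ∈ I.1 \ J.1) (hxy : x ≠ y) :
    ¬ (TSk G k).Adj I J := fun h =>
  hxy (mem_singleton.1 (sdiff_eq_singleton_of_adj h hx ▸ hy)).symm

theorem eq_of_adj_of_sdiff_eq (h₁ : (TSk G k).Adj I J₁) (h₂ : (TSk G k).Adj I J₂)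
    (h : J₁.1 \ I.1 = J₂.1 \ I.1) : J₁ = J₂ := by
  obtain ⟨u₁, hu₁, v, hv, huv, hJ₁⟩ := exists_insert_erase_of_adj h₁
  obtain ⟨u₂, -, v', hv', -, hJ₂⟩ := exists_insert_erase_of_adj h₂
  obtain rfl : v = v' := by
    simpa [hJ₁, hJ₂, insert_erase_sdiff hv, insert_erase_sdiff hv'] using h
  obtain rfl : u₁ = u₂ := by
    by_contra hne
    exact J₂.2.2 u₁ (by simp [hJ₂, hne, hu₁]) v (by simp [hJ₂]) huv
  exact Subtype.ext (hJ₁.trans hJ₂.symm)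

theorem adj_of_compl [Fintype V] {A B : Finset V} (hI : I.1 = Aᶜ) (hJ : J.1 = Bᶜ)
    (hx : B \ A = {x}) (hy : A \ B = {y}) (hxy : G.Adj x y) : (TSk G k).Adj I J :=
  adj_iff.2 ⟨x, y, by rw [hI, hJ, compl_sdiff_compl, hx], by rw [hI, hJ, compl_sdiff_compl, hy],
    hxy⟩

theorem adj_of_mem_sdiff (h : (TSk G k).Adj I J) (hx : x ∈ I.1 \ J.1) (hy : y ∈ J.1 \ I.1) :
    G.Adj x y := by
  obtain ⟨u, v, hu, hv, huv⟩ := adj_iff.1 h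
  rwa [mem_singleton.1 (hu ▸ hx : x ∈ ({u} : Finset V)),
    mem_singleton.1 (hv ▸ hy : y ∈ ({v} : Finset V))]

theorem exists_not_adj_not_adj (hk : 2 ≤ k) (h₁ : (TSk G k).Adj I J₁) (h₂ : (TSk G k).Adj I J₂)
    (hne : J₁ ≠ J₂) (h₁₂ : ¬ (TSk G k).Adj J₁ J₂) (h : I.1 \ J₁.1 = I.1 \ J₂.1) :
    ∃ S, ¬ (TSk G k).Adj I S ∧ ¬ (TSk G k).Adj J₁ S := by
  obtain ⟨u, hu, v₁, hv₁, -, hJ₁⟩ := exists_insert_erase_of_adj h₁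
  obtain ⟨u', hu', v₂, hv₂, -, hJ₂⟩ := exists_insert_erase_of_adj h₂
  obtain rfl : u = u' := by
    simpa [hJ₁, hJ₂, sdiff_insert_erase hu hv₁, sdiff_insert_erase hu' hv₂] using h
  have hv : v₁ ≠ v₂ := by
    rintro rfl
    exact hne (Subtype.ext (hJ₁.trans hJ₂.symm))
  have hv₁₂ : ¬ G.Adj v₁ v₂ := fun hadj => h₁₂ <|
    adj_of_insert_erase (by simp [hJ₁]) (by simp [hJ₁, hv.symm, hv₂]) hadj
      (by rw [hJ₂, hJ₁, erase_insert (by simp [hv₁])])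
  obtain ⟨w, hw⟩ : (I.1.erase u).Nonempty := by
    rw [← card_pos, card_erase_of_mem hu, I.2.1]
    omega
  have hwv₂ : w ≠ v₂ := ne_of_mem_of_not_mem (mem_of_mem_erase hw) hv₂
  have hwJ₁ : w ∈ J₁.1 := by simp [hJ₁, hw]
  have hwJ₂ : w ∈ J₂.1 := by simp [hJ₂, hw]
  have hv₂J₁ : v₂ ∉ J₁.1 := by simp [hJ₁, hv.symm, hv₂]
  have hSindep : IsIndep G (insert v₂ (J₁.1.erase w)) := by
    refine (J₁.2.2.mono (erase_subset _ _)).insert fun x hx hadj => ?_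
    rcases mem_insert.1 (hJ₁ ▸ mem_of_mem_erase hx) with rfl | hxI
    · exact hv₁₂ hadj.symm
    · exact J₂.2.2 v₂ (by simp [hJ₂]) x (by simp [hJ₂, hxI]) hadj
  let S : TSVert G k := ⟨insert v₂ (J₁.1.erase w), by
    rw [card_insert_of_notMem (fun h => hv₂J₁ (mem_of_mem_erase h)), card_erase_of_mem hwJ₁,
      J₁.2.1]
    omega, hSindep⟩
  refine ⟨S, fun hIS => not_adj_of_mem_sdiff (x := v₁) (y := v₂) ?_ ?_ hv hIS.symm,
    fun hJS => J₂.2.2 w hwJ₂ v₂ (by simp [hJ₂]) (adj_of_mem_sdiff hJS ?_ ?_)⟩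
  · simp [S, hJ₁, hv₁, hv, Ne.symm (ne_of_mem_of_not_mem (mem_of_mem_erase hw) hv₁)]
  · simp [S, hv₂]
  · simp [S, hwJ₁, hwv₂]
  · simp [S, hv₂J₁]

theorem eq_of_adj_of_sdiff_eq_of_iso (e : TSk G k ≃g completeBipartiteGraph α β) (hk : 2 ≤ k)
    (h₁ : (TSk G k).Adj I J₁) (h₂ : (TSk G k).Adj I J₂) (h : I.1 \ J₁.1 = I.1 \ J₂.1) :
    J₁ = J₂ := by
  by_contra hne
  have h₁' := e.map_adj_iff.2 h₁
  obtain ⟨S, hIS, hJS⟩ := exists_not_adj_not_adj hk h₁ h₂ hne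
    (fun h₁₂ => completeBipartiteGraph_not_adj_of_adj_of_adj h₁' (e.map_adj_iff.2 h₂)
      (e.map_adj_iff.2 h₁₂)) h
  rcases completeBipartiteGraph_adj_or_adj h₁' (e S) with h | h
  exacts [hIS (e.map_adj_iff.1 h), hJS (e.map_adj_iff.1 h)]

variable {ι : Type*} [Fintype ι] {b : ι → TSVert G k}

theorem card_le_of_forall_adj (e : TSk G k ≃g completeBipartiteGraph α β) (hk : 2 ≤ k)
    (hb : Function.Injective b) (hI : ∀ i, (TSk G k).Adj I (b i)) : Fintype.card ι ≤ k := by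
  choose u v hu using fun i => adj_iff.1 (hI i)
  calc Fintype.card ι = #(univ : Finset ι) := card_univ.symm
    _ ≤ #I.1 := card_le_card_of_injOn u
        (fun i _ => (mem_sdiff.1 ((hu i).1 ▸ mem_singleton_self (u i))).1)
        (fun i _ j _ hij => hb (eq_of_adj_of_sdiff_eq_of_iso e hk (hI i) (hI j)
          (by rw [(hu i).1, (hu j).1, hij])))
    _ = k := I.2.1

theorem card_le_two_of_forall_adj (e : TSk G k ≃g completeBipartiteGraph α β) (hk : 2 ≤ k)
    (hII' : I ≠ I') (hb : Function.Injective b) (hI : ∀ i, (TSk G k).Adj I (b i))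
    (hI' : ∀ i, (TSk G k).Adj I' (b i)) : Fintype.card ι ≤ 2 := by
  obtain ⟨p, hp⟩ : (I.1 \ I'.1).Nonempty := sdiff_nonempty.2 fun hsub =>
    hII' (Subtype.ext (eq_of_subset_of_card_le hsub (by rw [I.2.1, I'.2.1])))
  obtain ⟨hpI, hpI'⟩ := mem_sdiff.1 hp
  refine (Fintype.card_le_of_injective (fun i => decide (p ∈ (b i).1)) fun i j hij => ?_).trans
    (by simp)
  by_cases hpi : p ∈ (b i).1
  · have hpj : p ∈ (b j).1 := by simpa [hpi] using hij
    refine hb (eq_of_adj_of_sdiff_eq (hI' i) (hI' j) ?_)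
    rw [sdiff_eq_singleton_of_adj (hI' i).symm (mem_sdiff.2 ⟨hpi, hpI'⟩),
      sdiff_eq_singleton_of_adj (hI' j).symm (mem_sdiff.2 ⟨hpj, hpI'⟩)]
  · have hpj : p ∉ (b j).1 := by simpa [hpi] using hij
    refine hb (eq_of_adj_of_sdiff_eq_of_iso e hk (hI i) (hI j) ?_)
    rw [sdiff_eq_singleton_of_adj (hI i) (mem_sdiff.2 ⟨hpI, hpi⟩),
      sdiff_eq_singleton_of_adj (hI j) (mem_sdiff.2 ⟨hpI, hpj⟩)]

end TSk

/-- An independent set `a₁, …, a_k` and a clique `b₁, …, b_n`, with `b_j` adjacent to `a_j`. -/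
def starWitness (k n : ℕ) : SimpleGraph (Fin k ⊕ Fin n) where
  Adj
    | .inl i, .inr j | .inr j, .inl i => (i : ℕ) = j
    | .inr j, .inr j' => j ≠ j'
    | .inl _, .inl _ => False
  symm := ⟨by rintro (i | j) (i' | j') h <;> simp_all [eq_comm]⟩
  loopless := ⟨by rintro (i | j) <;> simp⟩

section Star

variable {k n : ℕ}

def starCenter (k n : ℕ) : Finset (Fin k ⊕ Fin n) := univ.map .inl

def starLeaf (hnk : n ≤ k) (j : Fin n) : Finset (Fin k ⊕ Fin n) :=
  insert (.inr j) ((starCenter k n).erase (.inl (j.castLE hnk)))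

theorem mem_starCenter {x : Fin k ⊕ Fin n} : x ∈ starCenter k n ↔ x.isLeft := by
  rcases x with i | j <;> simp [starCenter]

theorem card_starCenter : #(starCenter k n) = k := by simp [starCenter]

theorem isIndep_starCenter : IsIndep (starWitness k n) (starCenter k n) := by
  rintro (i | j) hx (i' | j') hy <;> simp_all [mem_starCenter, starWitness]

theorem card_starLeaf (hnk : n ≤ k) (j : Fin n) : #(starLeaf hnk j) = k := by
  have := (j.castLE hnk).pos
  rw [starLeaf, card_insert_of_notMem (by simp [mem_starCenter]),
    card_erase_of_mem (by simp [mem_starCenter]), card_starCenter]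
  omega

theorem isIndep_starLeaf (hnk : n ≤ k) (j : Fin n) :
    IsIndep (starWitness k n) (starLeaf hnk j) := by
  refine (isIndep_starCenter.mono (erase_subset _ _)).insert ?_
  rintro (i | j') hx
  · simp_all [starWitness, Fin.ext_iff, eq_comm]
  · simp [mem_starCenter] at hx

theorem inr_mem_starLeaf_iff (hnk : n ≤ k) {j j' : Fin n} : .inr j' ∈ starLeaf hnk j ↔ j' = j := by
  simp [starLeaf, mem_starCenter]

theorem starCenter_ne_starLeaf (hnk : n ≤ k) (j : Fin n) : starCenter k n ≠ starLeaf hnk j :=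
  fun h => by
    have : Sum.inr j ∈ starCenter k n := h ▸ (inr_mem_starLeaf_iff hnk).2 rfl
    simp [mem_starCenter] at this

theorem starLeaf_injective (hnk : n ≤ k) : Function.Injective (starLeaf hnk) :=
  fun _ _ h => (inr_mem_starLeaf_iff hnk).1 (h ▸ (inr_mem_starLeaf_iff hnk).2 rfl)

theorem eq_starCenter_or_eq_starLeaf (hnk : n ≤ k) {S : Finset (Fin k ⊕ Fin n)} (hS : #S = k)
    (hSi : IsIndep (starWitness k n) S) : S = starCenter k n ∨ ∃ j, S = starLeaf hnk j := by
  by_cases hleaf : ∃ j, .inr j ∈ S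
  · obtain ⟨j, hj⟩ := hleaf
    refine .inr ⟨j, eq_of_subset_of_card_le ?_ (by rw [hS, card_starLeaf])⟩
    rintro (i | j') hx
    · have := hSi _ hx _ hj
      simp_all [starLeaf, mem_starCenter, starWitness, Fin.ext_iff]
    · have := hSi _ hx _ hj
      simp_all [starLeaf, starWitness]
  · refine .inl (eq_of_subset_of_card_le ?_ (by rw [hS, card_starCenter]))
    rintro (i | j) hx
    · simp [mem_starCenter]
    · exact absurd ⟨j, hx⟩ hleaf

theorem nonempty_iso_starWitness (hnk : n ≤ k) :
    Nonempty (TSk (starWitness k n) k ≃g completeBipartiteGraph (Fin 1) (Fin n)) := by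
  let center : TSVert (starWitness k n) k := ⟨starCenter k n, card_starCenter, isIndep_starCenter⟩
  let leaf (j : Fin n) : TSVert (starWitness k n) k :=
    ⟨starLeaf hnk j, card_starLeaf hnk j, isIndep_starLeaf hnk j⟩
  refine nonempty_iso_completeBipartiteGraph (Sum.elim (fun _ => center) leaf) ⟨?_, ?_⟩ ?_ ?_ ?_
  · rintro (_ | j) (_ | j') h <;> have h' := congrArg Subtype.val h
    · exact congrArg _ (Subsingleton.elim _ _)
    · exact absurd h' (starCenter_ne_starLeaf hnk j')
    · exact absurd h'.symm (starCenter_ne_starLeaf hnk j)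
    · exact congrArg _ (starLeaf_injective hnk h')
  · rintro ⟨S, hS, hSi⟩
    rcases eq_starCenter_or_eq_starLeaf hnk hS hSi with rfl | ⟨j, rfl⟩
    exacts [⟨.inl 0, rfl⟩, ⟨.inr j, rfl⟩]
  · intro _ j
    exact TSk.adj_of_insert_erase (x := .inl (j.castLE hnk)) (y := .inr j)
      (by simp [center, mem_starCenter]) (by simp [center, mem_starCenter])
      (by simp [starWitness]) rfl
  · intro a a' h
    exact absurd (Subsingleton.elim a a') h
  · intro j j' h
    exact TSk.not_adj_of_mem_sdiff (x := .inr j) (y := .inl (j'.castLE hnk))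
      (by simp [leaf, starLeaf, h, mem_starCenter])
      (by simp [leaf, starLeaf, mem_starCenter, Fin.ext_iff, Fin.val_inj, Ne.symm h])
      (by simp)

end Star

def c4Witness (m : ℕ) : SimpleGraph (Fin 2 ⊕ Fin 2 ⊕ Fin m) := ⊤ ⊕g (⊤ ⊕g ⊥)

section C4

variable {m : ℕ}

def c4Holes (a b : Fin 2) : Finset (Fin 2 ⊕ Fin 2 ⊕ Fin m) := {.inl a, .inr (.inl b)}

theorem c4Holes_inj {a b a' b' : Fin 2} (h : c4Holes (m := m) a b = c4Holes a' b') :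
    a = a' ∧ b = b' := by
  have ha : .inl a ∈ c4Holes (m := m) a' b' := h ▸ mem_insert_self _ _
  have hb : .inr (.inl b) ∈ c4Holes (m := m) a' b' := h ▸ mem_insert_of_mem (mem_singleton_self _)
  simp_all [c4Holes]

theorem card_compl_c4Holes (a b : Fin 2) : #(c4Holes (m := m) a b)ᶜ = m + 2 := by
  rw [card_compl, c4Holes, card_pair (by simp)]
  simp
  omega

theorem isIndep_compl_c4Holes (a b : Fin 2) : IsIndep (c4Witness m) (c4Holes a b)ᶜ := by
  rintro (x | x | x) hx (y | y | y) hy h <;> simp_all [c4Holes, c4Witness] <;> omega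

theorem exists_eq_compl_c4Holes {S : Finset (Fin 2 ⊕ Fin 2 ⊕ Fin m)} (hS : #S = m + 2)
    (hSi : IsIndep (c4Witness m) S) : ∃ a b, S = (c4Holes a b)ᶜ := by
  obtain ⟨a, ha⟩ : ∃ a, .inl a ∉ S := by
    by_contra! h
    exact hSi _ (h 0) _ (h 1) (by simp [c4Witness])
  obtain ⟨b, hb⟩ : ∃ b, .inr (.inl b) ∉ S := by
    by_contra! h
    exact hSi _ (h 0) _ (h 1) (by simp [c4Witness])
  refine ⟨a, b, eq_of_subset_of_card_le (fun x hx => ?_) (by rw [hS, card_compl_c4Holes])⟩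
  simp only [c4Holes, mem_compl, mem_insert, mem_singleton, not_or]
  exact ⟨fun h => ha (h ▸ hx), fun h => hb (h ▸ hx)⟩

theorem nonempty_iso_c4Witness :
    Nonempty (TSk (c4Witness m) (m + 2) ≃g completeBipartiteGraph (Fin 2) (Fin 2)) := by
  let vert (a b : Fin 2) : TSVert (c4Witness m) (m + 2) :=
    ⟨(c4Holes a b)ᶜ, card_compl_c4Holes a b, isIndep_compl_c4Holes a b⟩
  refine nonempty_iso_completeBipartiteGraph
    (Sum.elim (fun i => vert i i) (fun j => vert j (j + 1))) ⟨?_, ?_⟩ ?_ ?_ ?_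
  · rintro (i | j) (i' | j') h <;>
      obtain ⟨h₁, h₂⟩ := c4Holes_inj (compl_injective (congrArg Subtype.val h)) <;>
      simp_all
  · rintro ⟨S, hS, hSi⟩
    obtain ⟨a, b, rfl⟩ := exists_eq_compl_c4Holes hS hSi
    fin_cases a <;> fin_cases b
    exacts [⟨.inl 0, rfl⟩, ⟨.inr 0, rfl⟩, ⟨.inr 1, rfl⟩, ⟨.inl 1, rfl⟩]
  · intro i j
    obtain rfl | rfl : j = i ∨ j = i + 1 := by omega
    · exact TSk.adj_of_compl (x := .inr (.inl (j + 1))) (y := .inr (.inl j)) rfl rfl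
        (by ext (a | a | a) <;> simp [c4Holes]; omega)
        (by ext (a | a | a) <;> simp [c4Holes]; omega) (by simp [c4Witness])
    · exact TSk.adj_of_compl (x := .inl (i + 1)) (y := .inl i) rfl rfl
        (by ext (a | a | a) <;> simp [c4Holes] <;> omega)
        (by ext (a | a | a) <;> simp [c4Holes] <;> omega) (by simp [c4Witness])
  · intro i i' h
    exact TSk.not_adj_of_mem_sdiff (x := .inl i') (y := .inr (.inl i'))
      (by simp [vert, c4Holes, h.symm]) (by simp [vert, c4Holes, h.symm]) (by simp)
  · intro j j' h
    exact TSk.not_adj_of_mem_sdiff (x := .inl j') (y := .inr (.inl (j' + 1)))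
      (by simp [vert, c4Holes, h.symm]) (by simp [vert, c4Holes, h.symm]) (by simp)

end C4

/-- For `n ≥ m ≥ 1` and `k ≥ 2`, the complete bipartite graph `K_{m,n}` is a
`TS_k`-reconfiguration graph iff (`m = 1` and `n ≤ k`) or `m = n = 2`. -/
theorem stmt8 (m n k : ℕ) (hm : 1 ≤ m) (hmn : m ≤ n) (hk : 2 ≤ k) :
    (∃ (W : Type) (_ : Fintype W) (dW : DecidableEq W) (G : SimpleGraph W),
      Nonempty ((@TSk W dW G k) ≃g completeBipartiteGraph (Fin m) (Fin n))) ↔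
    ((m = 1 ∧ n ≤ k) ∨ (m = 2 ∧ n = 2)) := by
  constructor
  · rintro ⟨W, -, dW, G, ⟨e⟩⟩
    let left (i : Fin m) : TSVert G k := e.symm (.inl i)
    let right (j : Fin n) : TSVert G k := e.symm (.inr j)
    have hright : Function.Injective right := e.symm.injective.comp Sum.inr_injective
    have hadj (i : Fin m) (j : Fin n) : (TSk G k).Adj (left i) (right j) :=
      e.symm.map_adj_iff.2 (by simp)
    have hnk : n ≤ k := by
      simpa using TSk.card_le_of_forall_adj e hk hright (hadj ⟨0, hm⟩)
    have hn2 (hm2 : 2 ≤ m) : n ≤ 2 := by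
      have hne : left ⟨0, hm⟩ ≠ left ⟨1, hm2⟩ := by simp [left, Fin.ext_iff]
      simpa using TSk.card_le_two_of_forall_adj e hk hne hright (hadj _) (hadj _)
    omega
  · rintro (⟨rfl, hnk⟩ | ⟨rfl, rfl⟩)
    · exact ⟨_, inferInstance, inferInstance, starWitness k n, nonempty_iso_starWitness hnk⟩
    · obtain ⟨k, rfl⟩ := Nat.exists_eq_add_of_le' hk
      exact ⟨_, inferInstance, inferInstance, c4Witness k, nonempty_iso_c4Witness⟩
end

section
/- For integers k ≥ 2 and n ≥ 3: if TS_k(G) contains a clique of size n, then G contains a clique of size n. In particular, if TS_k(G) contains a triangle, then G contains a triangle. -/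
open SimpleGraph

/-! Fix two adjacent members `I, J` of an `n`-clique of `TS_k(G)` and let `A = I ∩ J`, a set of
size `k - 1`. In a triangle of `TS_k(G)` the intersection of two members lies in the third, so every
member of the clique is `A` plus one extra vertex. Adjacent members are exchanged along an edge of
`G` joining their extra vertices, so these `n` extra vertices form an `n`-clique of `G`. -/

lemma SimpleGraph.IsNClique.image_of_adj {α β : Type*} [DecidableEq β] {H : SimpleGraph α}
    {G : SimpleGraph β} {n : ℕ} {S : Finset α} (hS : H.IsNClique n S) (c : α → β)
    (hc : ∀ K ∈ S, ∀ L ∈ S, H.Adj K L → G.Adj (c K) (c L)) : G.IsNClique n (S.image c) := by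
  have hadj : ∀ K ∈ S, ∀ L ∈ S, K ≠ L → G.Adj (c K) (c L) :=
    fun K hK L hL hKL => hc K hK L hL (hS.isClique hK hL hKL)
  refine ⟨?_, ?_⟩
  · rw [isClique_iff, Finset.coe_image]
    rintro _ ⟨K, hK, rfl⟩ _ ⟨L, hL, rfl⟩ hne
    exact hadj K hK L hL (ne_of_apply_ne c hne)
  · rw [Finset.card_image_of_injOn, hS.card_eq]
    intro K hK L hL hcKL
    by_contra hKL
    exact (hadj K hK L hL hKL).ne hcKL

namespace TSk

variable {V : Type*} [DecidableEq V] {G : SimpleGraph V} {k : ℕ}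

lemma exists_sdiff_eq_singleton_of_adj {I J : TSVert G k} (h : (TSk G k).Adj I J) :
    ∃ u v, (I : Finset V) \ J = {u} ∧ (J : Finset V) \ I = {v} ∧ G.Adj u v := by
  rw [TSk, fromRel_adj] at h
  obtain ⟨-, h | ⟨u, v, hu, hv, huv⟩⟩ := h
  · exact h
  · exact ⟨v, u, hv, hu, huv.symm⟩

lemma card_inter_add_one_of_adj {I J : TSVert G k} (h : (TSk G k).Adj I J) :
    ((I : Finset V) ∩ J).card + 1 = k := by
  obtain ⟨u, -, hu, -⟩ := exists_sdiff_eq_singleton_of_adj h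
  have hcard := Finset.card_sdiff_add_card_inter (I : Finset V) J
  rw [hu, Finset.card_singleton, I.2.1] at hcard
  omega

/-- A vertex `x ∈ I ∩ J` missing from `K` would be the vertex that both `I` and `J` give up, so
the vertex `a` of `I \ J` lies in `K`; the edge of the exchange `J – K` then joins `x` and `a`,
two vertices of the independent set `I`. -/
lemma inter_subset_of_adj {I J K : TSVert G k} (hIJ : (TSk G k).Adj I J)
    (hIK : (TSk G k).Adj I K) (hJK : (TSk G k).Adj J K) : (I : Finset V) ∩ J ⊆ K := by
  obtain ⟨a, -, ha, -, -⟩ := exists_sdiff_eq_singleton_of_adj hIJ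
  obtain ⟨u, -, hu, -, -⟩ := exists_sdiff_eq_singleton_of_adj hIK
  obtain ⟨u', v', hu', hv', hxa⟩ := exists_sdiff_eq_singleton_of_adj hJK
  intro x hx
  by_contra hxK
  obtain ⟨hxI, hxJ⟩ := Finset.mem_inter.mp hx
  have hxu : x = u := Finset.mem_singleton.mp (hu ▸ Finset.mem_sdiff.mpr ⟨hxI, hxK⟩)
  have hxu' : x = u' := Finset.mem_singleton.mp (hu' ▸ Finset.mem_sdiff.mpr ⟨hxJ, hxK⟩)
  obtain ⟨haI, haJ⟩ : a ∈ (I : Finset V) ∧ a ∉ (J : Finset V) :=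
    Finset.mem_sdiff.mp (ha ▸ Finset.mem_singleton_self a)
  have haK : a ∈ (K : Finset V) := by
    by_contra haK
    have hau : a = u := Finset.mem_singleton.mp (hu ▸ Finset.mem_sdiff.mpr ⟨haI, haK⟩)
    exact haJ (hau ▸ hxu ▸ hxJ)
  have hav' : a = v' := Finset.mem_singleton.mp (hv' ▸ Finset.mem_sdiff.mpr ⟨haK, haJ⟩)
  subst hxu' hav'
  exact I.2.2 x hxI a haI hxa

lemma adj_of_adj_of_eq_insert {K L : TSVert G k} {A : Finset V} {x y : V}
    (hKL : (TSk G k).Adj K L) (hK : (K : Finset V) = insert x A)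
    (hL : (L : Finset V) = insert y A) (hx : x ∉ A) (hy : y ∉ A) : G.Adj x y := by
  obtain ⟨u, v, hu, hv, huv⟩ := exists_sdiff_eq_singleton_of_adj hKL
  have hxy : x ≠ y := by
    rintro rfl
    exact hKL.ne (Subtype.ext (hK.trans hL.symm))
  rw [hK, hL, Finset.insert_sdiff_insert' hxy hx, Finset.singleton_inj] at hu
  rw [hK, hL, Finset.insert_sdiff_insert' hxy.symm hy, Finset.singleton_inj] at hv
  subst hu hv
  exact huv

lemma exists_eq_insert_inter_of_isClique {S : Finset (TSVert G k)} (hS : (TSk G k).IsClique S)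
    {I J K : TSVert G k} (hI : I ∈ S) (hJ : J ∈ S) (hIJ : I ≠ J) (hK : K ∈ S) :
    ∃ c ∉ (I : Finset V) ∩ J, insert c ((I : Finset V) ∩ J) = K := by
  have hadj := hS hI hJ hIJ
  have hsub : (I : Finset V) ∩ J ⊆ K := by
    by_cases hKI : K = I
    · exact hKI ▸ Finset.inter_subset_left
    by_cases hKJ : K = J
    · exact hKJ ▸ Finset.inter_subset_right
    exact inter_subset_of_adj hadj (hS hI hK (Ne.symm hKI)) (hS hJ hK (Ne.symm hKJ))
  rw [Finset.exists_eq_insert_iff, card_inter_add_one_of_adj hadj, K.2.1]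
  exact ⟨hsub, rfl⟩

end TSk

theorem stmt9_general {V : Type*} [DecidableEq V] (G : SimpleGraph V) (k n : ℕ)
    (hn : 3 ≤ n)
    (S : Finset (TSVert G k)) (hS : (TSk G k).IsNClique n S) :
    ∃ T : Finset V, G.IsNClique n T := by
  obtain ⟨I, hI, J, hJ, hIJ⟩ := Finset.one_lt_card.mp (by rw [hS.card_eq]; omega)
  have hcore := fun K (hK : K ∈ S) =>
    TSk.exists_eq_insert_inter_of_isClique hS.isClique hI hJ hIJ hK
  have : Nonempty V := ⟨(hcore I hI).choose⟩
  choose! c hcA hc using hcore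
  refine ⟨S.image c, hS.image_of_adj c fun K hK L hL hKL => ?_⟩
  exact TSk.adj_of_adj_of_eq_insert hKL (hc K hK).symm (hc L hL).symm (hcA K hK) (hcA L hL)

/-- If `TS_k(G)` contains a clique of size `n` (`k ≥ 2`, `n ≥ 3`), then so does `G`. -/
theorem stmt9 {V : Type*} [DecidableEq V] (G : SimpleGraph V) (k n : ℕ)
    (hk : 2 ≤ k) (hn : 3 ≤ n)
    (S : Finset (TSVert G k)) (hS : (TSk G k).IsNClique n S) :
    ∃ T : Finset V, G.IsNClique n T :=
  stmt9_general G k n hn S hS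
end

section
/- If the components of a graph G are G_1, …, G_p and each G_i is a TS_k-reconfiguration graph for a fixed k ≥ 2, then G is a TS_k-reconfiguration graph. Concretely, if G_i = TS_k(H_i) and H is the join of H_1, …, H_p (adding all edges between distinct H_i and H_j), then TS_k(H) is isomorphic to the disjoint union of the TS_k(H_i). -/
open SimpleGraph

/-- The disjoint union of a family of graphs. -/
def sigmaGraph {ι : Type*} {W : ι → Type*} (F : ∀ i, SimpleGraph (W i)) :
    SimpleGraph (Σ i, W i) :=
  SimpleGraph.fromRel (fun x y => ∃ h : x.1 = y.1, (F y.1).Adj (h ▸ x.2) y.2)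

/-- The join of a family of graphs: all edges between distinct parts are added. -/
def joinFamily {ι : Type*} {W : ι → Type*} (F : ∀ i, SimpleGraph (W i)) :
    SimpleGraph (Σ i, W i) :=
  SimpleGraph.fromRel (fun x y =>
    x.1 ≠ y.1 ∨ ∃ h : x.1 = y.1, (F y.1).Adj (h ▸ x.2) y.2)

section Aux
variable {p : ℕ} {W : Fin p → Type} [∀ i, DecidableEq (W i)]

lemma join_adj_same (H : ∀ i, SimpleGraph (W i)) {i : Fin p} (a b : W i) :
    (joinFamily H).Adj ⟨i, a⟩ ⟨i, b⟩ ↔ (H i).Adj a b := by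
  rw [joinFamily, fromRel_adj]
  constructor
  · rintro ⟨hne, (h | ⟨h, hadj⟩) | (h | ⟨h, hadj⟩)⟩
    · exact absurd rfl h
    · exact hadj
    · exact absurd rfl h
    · exact hadj.symm
  · intro h
    refine ⟨fun he => h.ne (by injection he), Or.inl (Or.inr ⟨rfl, h⟩)⟩

lemma join_adj_ne (H : ∀ i, SimpleGraph (W i)) {x y : Σ i, W i} (h : x.1 ≠ y.1) :
    (joinFamily H).Adj x y :=
  ⟨fun he => h (by rw [he]), Or.inl (Or.inl h)⟩

lemma sigma_adj_same {ι : Type*} {W : ι → Type*} (F : ∀ i, SimpleGraph (W i)) {i : ι}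
    (a b : W i) :
    (sigmaGraph F).Adj ⟨i, a⟩ ⟨i, b⟩ ↔ ((F i).Adj a b ∨ (F i).Adj b a) ∧ a ≠ b := by
  rw [sigmaGraph, fromRel_adj]
  constructor
  · rintro ⟨hne, ⟨h, hadj⟩ | ⟨h, hadj⟩⟩
    · exact ⟨Or.inl hadj, fun he => hne (by rw [he])⟩
    · exact ⟨Or.inr hadj, fun he => hne (by rw [he])⟩
  · rintro ⟨h, hne⟩
    refine ⟨fun he => hne (by injection he), ?_⟩
    rcases h with h | h
    · exact Or.inl ⟨rfl, h⟩
    · exact Or.inr ⟨rfl, h⟩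

/-- The embedding `W i ↪ Σ j, W j`. -/
def semb (W : Fin p → Type) (i : Fin p) : W i ↪ Σ j, W j :=
  ⟨Sigma.mk i, sigma_mk_injective⟩

/-- The forward map: a size-`k` independent set of `H i` gives one of the join. -/
def gmap (H : ∀ i, SimpleGraph (W i)) (k : ℕ) (x : Σ i, TSVert (H i) k) :
    TSVert (joinFamily H) k :=
  ⟨(x.2.1 : Finset (W x.1)).map (semb W x.1), by
    refine ⟨by rw [Finset.card_map]; exact x.2.2.1, ?_⟩
    rintro u hu v hv hadj
    rw [Finset.mem_map] at hu hv
    obtain ⟨a, ha, rfl⟩ := hu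
    obtain ⟨b, hb, rfl⟩ := hv
    exact x.2.2.2 a ha b hb ((join_adj_same H a b).mp hadj)⟩

lemma gmap_injective (H : ∀ i, SimpleGraph (W i)) (k : ℕ) (hk : 2 ≤ k) :
    Function.Injective (gmap H k) := by
  rintro ⟨i, I⟩ ⟨j, J⟩ h
  have h' : (I.1.map (semb W i) : Finset (Σ j, W j)) = J.1.map (semb W j) :=
    congrArg Subtype.val h
  have hI : I.1.Nonempty := Finset.card_pos.mp (by rw [I.2.1]; omega)
  obtain ⟨a, ha⟩ := hI
  have hmem : (⟨i, a⟩ : Σ j, W j) ∈ J.1.map (semb W j) := by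
    rw [← h']; exact Finset.mem_map_of_mem _ ha
  rw [Finset.mem_map] at hmem
  obtain ⟨b, hb, hba⟩ := hmem
  have hij : j = i := congrArg Sigma.fst hba
  subst hij
  have : I.1 = J.1 := Finset.map_injective (semb W j) h'
  exact congrArg (Sigma.mk j) (Subtype.ext this)

lemma gmap_surjective (H : ∀ i, SimpleGraph (W i)) (k : ℕ) (hk : 2 ≤ k) :
    Function.Surjective (gmap H k) := by
  rintro ⟨I, hcard, hind⟩
  have hI : I.Nonempty := Finset.card_pos.mp (by rw [hcard]; omega)
  obtain ⟨x, hx⟩ := hI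
  have hfst : ∀ y ∈ I, y.1 = x.1 := by
    intro y hy
    by_contra h
    exact hind y hy x hx (join_adj_ne H h)
  set i := x.1 with hi
  set I₀ : Finset (W i) := I.preimage (Sigma.mk i) sigma_mk_injective.injOn with hI₀
  have hmap : I₀.map (semb W i) = I := by
    ext z
    simp only [Finset.mem_map, hI₀, Finset.mem_preimage, semb, Function.Embedding.coeFn_mk]
    constructor
    · rintro ⟨a, ha, rfl⟩; exact ha
    · intro hz
      obtain ⟨j, b⟩ := z
      have : j = i := hfst ⟨j, b⟩ hz
      subst this
      exact ⟨b, hz, rfl⟩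
  have hcard₀ : I₀.card = k := by
    rw [← hcard, ← hmap, Finset.card_map]
  have hind₀ : IsIndep (H i) I₀ := by
    intro a ha b hb hadj
    have ha' : (⟨i, a⟩ : Σ j, W j) ∈ I := by rw [← hmap]; exact Finset.mem_map_of_mem _ ha
    have hb' : (⟨i, b⟩ : Σ j, W j) ∈ I := by rw [← hmap]; exact Finset.mem_map_of_mem _ hb
    exact hind _ ha' _ hb' ((join_adj_same H a b).mpr hadj)
  exact ⟨⟨i, ⟨I₀, hcard₀, hind₀⟩⟩, Subtype.ext hmap⟩

lemma map_sdiff_semb {i : Fin p} (I J : Finset (W i)) :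
    I.map (semb W i) \ J.map (semb W i) = (I \ J).map (semb W i) := by
  ext z
  simp only [Finset.mem_sdiff, Finset.mem_map, semb, Function.Embedding.coeFn_mk]
  constructor
  · rintro ⟨⟨a, ha, rfl⟩, hz⟩
    exact ⟨a, ⟨ha, fun hb => hz ⟨a, hb, rfl⟩⟩, rfl⟩
  · rintro ⟨a, ⟨ha, hna⟩, rfl⟩
    exact ⟨⟨a, ha, rfl⟩, fun ⟨b, hb, hba⟩ => hna (by cases sigma_mk_injective hba; exact hb)⟩

end Aux

/-- If `H` is the join of graphs `H_1, …, H_p`, then `TS_k(H)` is isomorphic to the disjoint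
union of the `TS_k(H_i)`; in particular a disjoint union of `TS_k`-reconfiguration graphs is
again a `TS_k`-reconfiguration graph. -/
theorem stmt10 (p : ℕ) (W : Fin p → Type) [∀ i, DecidableEq (W i)] [∀ i, Fintype (W i)]
    (H : ∀ i, SimpleGraph (W i)) (k : ℕ) (hk : 2 ≤ k) :
    Nonempty (TSk (joinFamily H) k ≃g sigmaGraph (fun i => TSk (H i) k)) := by
  have hbij : Function.Bijective (gmap H k) :=
    ⟨gmap_injective H k hk, gmap_surjective H k hk⟩
  let e := Equiv.ofBijective (gmap H k) hbij
  refine ⟨⟨e.symm, ?_⟩⟩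
  -- suffices to check the map_rel_iff for `e` (symm direction via the forward)
  have key : ∀ x y : Σ i, TSVert (H i) k,
      (TSk (joinFamily H) k).Adj (gmap H k x) (gmap H k y) ↔
        (sigmaGraph (fun i => TSk (H i) k)).Adj x y := by
    rintro ⟨i, I⟩ ⟨j, J⟩
    by_cases hij : i = j
    · subst hij
      rw [sigma_adj_same]
      constructor
      · rintro ⟨hne, hrel⟩
        have hne' : I ≠ J := by
          intro h; exact hne (by rw [h])
        -- extract the relation in either direction
        have : ∀ (A B : TSVert (H i) k),
            (∃ u v, ((gmap H k ⟨i, A⟩).1 : Finset (Σ j, W j)) \ (gmap H k ⟨i, B⟩).1 = {u} ∧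
              ((gmap H k ⟨i, B⟩).1 : Finset (Σ j, W j)) \ (gmap H k ⟨i, A⟩).1 = {v} ∧
              (joinFamily H).Adj u v) →
            (TSk (H i) k).Adj A B := by
          rintro A B ⟨u, v, h1, h2, hadj⟩
          have hu : u ∈ A.1.map (semb W i) \ B.1.map (semb W i) := by
            rw [show (A.1.map (semb W i) \ B.1.map (semb W i) : Finset _) = {u} from h1]
            exact Finset.mem_singleton_self u
          have hv : v ∈ B.1.map (semb W i) \ A.1.map (semb W i) := by
            rw [show (B.1.map (semb W i) \ A.1.map (semb W i) : Finset _) = {v} from h2]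
            exact Finset.mem_singleton_self v
          obtain ⟨a, _, rfl⟩ := Finset.mem_map.mp (Finset.mem_sdiff.mp hu).1
          obtain ⟨b, _, rfl⟩ := Finset.mem_map.mp (Finset.mem_sdiff.mp hv).1
          have h1' : A.1 \ B.1 = {a} := by
            apply Finset.map_injective (semb W i)
            rw [← map_sdiff_semb, Finset.map_singleton]
            exact h1
          have h2' : B.1 \ A.1 = {b} := by
            apply Finset.map_injective (semb W i)
            rw [← map_sdiff_semb, Finset.map_singleton]
            exact h2
          have hadj' : (H i).Adj a b := (join_adj_same H a b).mp hadj
          have hAB : A ≠ B := by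
            intro h; subst h
            simp at h1'
          exact ⟨hAB, Or.inl ⟨a, b, h1', h2', hadj'⟩⟩
        rcases hrel with h | h
        · exact ⟨Or.inl (this I J h), hne'⟩
        · exact ⟨Or.inr (this J I h), hne'⟩
      · rintro ⟨hadj, hne⟩
        have hrel : ∀ (A B : TSVert (H i) k), (TSk (H i) k).Adj A B →
            ∃ u v, ((gmap H k ⟨i, A⟩).1 : Finset (Σ j, W j)) \ (gmap H k ⟨i, B⟩).1 = {u} ∧
              ((gmap H k ⟨i, B⟩).1 : Finset (Σ j, W j)) \ (gmap H k ⟨i, A⟩).1 = {v} ∧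
              (joinFamily H).Adj u v := by
          rintro A B ⟨hABne, hr⟩
          rcases hr with ⟨a, b, h1, h2, hab⟩ | ⟨a, b, h1, h2, hab⟩
          · exact ⟨⟨i, a⟩, ⟨i, b⟩, by
              show A.1.map (semb W i) \ B.1.map (semb W i) = _
              rw [map_sdiff_semb, h1, Finset.map_singleton]; rfl, by
              show B.1.map (semb W i) \ A.1.map (semb W i) = _
              rw [map_sdiff_semb, h2, Finset.map_singleton]; rfl,
              (join_adj_same H a b).mpr hab⟩
          · exact ⟨⟨i, b⟩, ⟨i, a⟩, by
              show A.1.map (semb W i) \ B.1.map (semb W i) = _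
              rw [map_sdiff_semb, h2, Finset.map_singleton]; rfl, by
              show B.1.map (semb W i) \ A.1.map (semb W i) = _
              rw [map_sdiff_semb, h1, Finset.map_singleton]; rfl,
              (join_adj_same H b a).mpr hab.symm⟩
        have hgne : gmap H k ⟨i, I⟩ ≠ gmap H k ⟨i, J⟩ := by
          intro h
          have h2 := gmap_injective H k hk h
          injection h2 with h3 h4
          exact hne h4
        rcases hadj with h | h
        · exact ⟨hgne, Or.inl (hrel I J h)⟩
        · exact ⟨hgne, Or.inr (hrel J I h)⟩
    · -- different components: neither side can hold
      constructor
      · rintro ⟨hne, hrel⟩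
        exfalso
        have hdisj : ∀ (i' j' : Fin p), i' ≠ j' → ∀ (A : TSVert (H i') k) (B : TSVert (H j') k),
            (A.1.map (semb W i') : Finset (Σ l, W l)) \ B.1.map (semb W j') =
              A.1.map (semb W i') := by
          intro i' j' hne' A B
          apply Finset.sdiff_eq_self_of_disjoint
          rw [Finset.disjoint_left]
          rintro z hz hz'
          obtain ⟨a, _, rfl⟩ := Finset.mem_map.mp hz
          obtain ⟨b, _, hb⟩ := Finset.mem_map.mp hz'
          exact hne' (congrArg Sigma.fst hb).symm
        rcases hrel with ⟨u, v, h1, _, _⟩ | ⟨u, v, h1, _, _⟩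
        · have : (I.1.map (semb W i) : Finset (Σ l, W l)) = {u} := by
            rw [← hdisj i j hij I J]; exact h1
          have hc := congrArg Finset.card this
          rw [Finset.card_map, I.2.1, Finset.card_singleton] at hc
          omega
        · have : (J.1.map (semb W j) : Finset (Σ l, W l)) = {u} := by
            rw [← hdisj j i (Ne.symm hij) J I]; exact h1
          have hc := congrArg Finset.card this
          rw [Finset.card_map, J.2.1, Finset.card_singleton] at hc
          omega
      · rintro ⟨hne, hrel⟩
        exfalso
        rcases hrel with ⟨h, _⟩ | ⟨h, _⟩
        · exact hij h
        · exact hij h.symm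
  intro a b
  have ha := e.apply_symm_apply a
  have hb := e.apply_symm_apply b
  calc (sigmaGraph (fun i => TSk (H i) k)).Adj (e.symm a) (e.symm b)
      ↔ (TSk (joinFamily H) k).Adj (gmap H k (e.symm a)) (gmap H k (e.symm b)) :=
        (key _ _).symm
    _ ↔ (TSk (joinFamily H) k).Adj a b := by
        rw [show gmap H k (e.symm a) = a from ha, show gmap H k (e.symm b) = b from hb]
end

section
/- If a graph G admits a proper s-coloring, then so does TS(G); moreover χ(TS(G)) = χ(G). Concretely, if f : V(G) → Z/sZ is a proper coloring of G, then assigning to each independent set I the value (Σ_{v∈I} f(v)) mod s is a proper s-coloring of TS(G). -/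
/-!
Moving a token along an edge `uv` replaces the summand `f u` of `Σ_{w ∈ I} f w` by `f v`, so the
color sums of a proper coloring by a cancellative monoid properly color `TS(G)`; with colors in
`ZMod n` this gives `χ(TS(G)) ≤ χ(G)`. Conversely, singletons embed `G` into `TS(G)`.
-/

open SimpleGraph

/-- Vertices of the `TS`-reconfiguration graph: all nonempty independent sets of `G`. -/
abbrev TSVertAll {V : Type*} (G : SimpleGraph V) := {I : Finset V // I.Nonempty ∧ IsIndep G I}

/-- The `TS`-reconfiguration graph of `G`: nonempty independent sets, adjacent iff
`I \ J = {u}`, `J \ I = {v}` and `uv ∈ E(G)`. -/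
def TSfull {V : Type*} [DecidableEq V] (G : SimpleGraph V) : SimpleGraph (TSVertAll G) :=
  SimpleGraph.fromRel (fun I J =>
    ∃ u v, (I : Finset V) \ (J : Finset V) = {u} ∧
      (J : Finset V) \ (I : Finset V) = {v} ∧ G.Adj u v)

section

variable {V α : Type*} [DecidableEq V]

theorem Finset.sum_ne_sum_of_sdiff_eq_singleton [AddCancelCommMonoid α] {I J : Finset V}
    {u v : V} {f : V → α} (hI : I \ J = {u}) (hJ : J \ I = {v}) (huv : f u ≠ f v) :
    ∑ w ∈ I, f w ≠ ∑ w ∈ J, f w := by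
  rw [← Finset.sum_inter_add_sum_sdiff I J, ← Finset.sum_inter_add_sum_sdiff J I, hI, hJ,
    Finset.sum_singleton, Finset.sum_singleton, Finset.inter_comm]
  exact fun h => huv (add_left_cancel h)

theorem sum_ne_sum_of_tsfull_adj [AddCancelCommMonoid α] {G : SimpleGraph V} {f : V → α}
    (hf : ∀ u v, G.Adj u v → f u ≠ f v) {I J : TSVertAll G} (hIJ : (TSfull G).Adj I J) :
    ∑ w ∈ (I : Finset V), f w ≠ ∑ w ∈ (J : Finset V), f w := by
  obtain ⟨-, ⟨u, v, hI, hJ, huv⟩ | ⟨u, v, hJ, hI, huv⟩⟩ := hIJ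
  · exact Finset.sum_ne_sum_of_sdiff_eq_singleton hI hJ (hf u v huv)
  · exact (Finset.sum_ne_sum_of_sdiff_eq_singleton hJ hI (hf u v huv)).symm

def SimpleGraph.Coloring.tsfullSum [AddCancelCommMonoid α] {G : SimpleGraph V}
    (C : G.Coloring α) : (TSfull G).Coloring α :=
  Coloring.mk (fun I => ∑ w ∈ (I : Finset V), C w)
    (sum_ne_sum_of_tsfull_adj (fun _ _ h => C.valid h))

theorem SimpleGraph.Colorable.tsfull {G : SimpleGraph V} {n : ℕ} (hG : G.Colorable n) :
    (TSfull G).Colorable n := by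
  cases n with
  | zero =>
    have : IsEmpty V := colorable_zero_iff.mp hG
    exact colorable_zero_iff.mpr ⟨fun I => isEmptyElim I.2.1.choose⟩
  | succ n =>
    obtain ⟨C⟩ := hG
    simpa using (recolorOfEquiv G (ZMod.finEquiv (n + 1)).toEquiv C).tsfullSum.colorable

def tsfullSingleton (G : SimpleGraph V) : G →g TSfull G where
  toFun v := ⟨{v}, Finset.singleton_nonempty v, by simp [IsIndep]⟩
  map_rel' {u v} huv := by
    refine ⟨by simpa [Subtype.ext_iff] using huv.ne, Or.inl ⟨u, v, ?_, ?_, huv⟩⟩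
    · simpa using huv.ne
    · simpa using huv.ne.symm

end

/-- If `f` is a proper coloring of `G` by `ZMod s`, then `I ↦ Σ_{v ∈ I} f v` is a proper
coloring of `TS(G)`; moreover `χ(TS(G)) = χ(G)`. -/
theorem stmt13 {V : Type*} [DecidableEq V] (G : SimpleGraph V) (s : ℕ)
    (f : V → ZMod s) (hf : ∀ u v, G.Adj u v → f u ≠ f v) :
    (∀ I J : TSVertAll G, (TSfull G).Adj I J →
      (∑ v ∈ (I : Finset V), f v) ≠ ∑ v ∈ (J : Finset V), f v) ∧
    (TSfull G).chromaticNumber = G.chromaticNumber :=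
  ⟨fun _ _ => sum_ne_sum_of_tsfull_adj hf,
    le_antisymm (chromaticNumber_le_of_forall_imp fun _ => Colorable.tsfull)
      (chromaticNumber_mono_of_hom (tsfullSingleton G))⟩
end

section
/- For every n ≥ 3, the graph TS_2(P_n) is planar. -/
open SimpleGraph

/-- A graph is planar if it admits a plane drawing: vertices are mapped injectively to points
of the plane, each edge is realized by a continuous injective arc joining the images of its
endpoints, arcs meet vertex points only at their endpoints, and two distinct arcs meet only
at common endpoints. -/
def IsPlanar {V : Type*} (G : SimpleGraph V) : Prop :=
  ∃ (p : V → ℝ × ℝ) (γ : Sym2 V → Set.Icc (0 : ℝ) 1 → ℝ × ℝ),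
    Function.Injective p ∧
    (∀ e ∈ G.edgeSet, Continuous (γ e) ∧ Function.Injective (γ e)) ∧
    (∀ e ∈ G.edgeSet, ∃ u v : V, e = s(u, v) ∧
      γ e ⟨0, by norm_num⟩ = p u ∧ γ e ⟨1, by norm_num⟩ = p v) ∧
    (∀ e ∈ G.edgeSet, ∀ t : Set.Icc (0 : ℝ) 1, (t : ℝ) ≠ 0 → (t : ℝ) ≠ 1 →
      ∀ v : V, γ e t ≠ p v) ∧
    (∀ e ∈ G.edgeSet, ∀ e' ∈ G.edgeSet, e ≠ e' →
      ∀ t t' : Set.Icc (0 : ℝ) 1, γ e t = γ e' t' →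
        (((t : ℝ) = 0 ∨ (t : ℝ) = 1) ∧ ((t' : ℝ) = 0 ∨ (t' : ℝ) = 1)))

/-! ### Auxiliary: straight-line drawings of unit-grid graphs -/

section Grid

variable {V : Type*}

open Classical in
/-- A canonical (lexicographically increasing) ordering of the two endpoints of `e`. -/
noncomputable def gridEnds (p : V → ℝ × ℝ) (e : Sym2 V) : V × V :=
  if (p e.out.1).1 < (p e.out.2).1 ∨
      ((p e.out.1).1 = (p e.out.2).1 ∧ (p e.out.1).2 ≤ (p e.out.2).2)
  then e.out else e.out.swap

/-- Straight-line drawing of edges. -/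
noncomputable def gridGam (p : V → ℝ × ℝ) (e : Sym2 V) (t : Set.Icc (0 : ℝ) 1) : ℝ × ℝ :=
  p (gridEnds p e).1 + (t : ℝ) • (p (gridEnds p e).2 - p (gridEnds p e).1)

lemma gridEnds_mk (p : V → ℝ × ℝ) (e : Sym2 V) :
    e = s((gridEnds p e).1, (gridEnds p e).2) := by
  unfold gridEnds
  split
  · conv_lhs => rw [← e.out_eq]
  · conv_lhs => rw [← e.out_eq]
    exact Sym2.eq_swap

lemma gridEnds_lex (p : V → ℝ × ℝ) (e : Sym2 V) :
    (p (gridEnds p e).1).1 < (p (gridEnds p e).2).1 ∨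
      ((p (gridEnds p e).1).1 = (p (gridEnds p e).2).1 ∧
        (p (gridEnds p e).1).2 ≤ (p (gridEnds p e).2).2) := by
  unfold gridEnds
  split
  · assumption
  · rename_i h
    push_neg at h
    simp only [Prod.fst_swap, Prod.snd_swap]
    obtain ⟨h1, h2⟩ := h
    rcases lt_or_eq_of_le h1 with h3 | h3
    · exact Or.inl h3
    · exact Or.inr ⟨h3, le_of_lt (h2 h3.symm)⟩

/-- A real number in `[0,1]` that is a difference of integers is `0` or `1`. -/
lemma int_in_unit {a b : ℤ} {t : ℝ} (h0 : 0 ≤ t) (h1 : t ≤ 1)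
    (h : (a : ℝ) + t = (b : ℝ)) : t = 0 ∨ t = 1 := by
  have ht : t = ((b - a : ℤ) : ℝ) := by push_cast; linarith
  rw [ht] at h0 h1 ⊢
  have h0' : (0 : ℤ) ≤ b - a := by exact_mod_cast h0
  have h1' : (b - a : ℤ) ≤ 1 := by exact_mod_cast h1
  interval_cases h : (b - a : ℤ) <;> simp_all

lemma no_int_in_open {a b : ℤ} {t : ℝ} (h0 : 0 < t) (h1 : t < 1)
    (h : (a : ℝ) + t = (b : ℝ)) : False := by
  have ht : t = ((b - a : ℤ) : ℝ) := by push_cast; linarith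
  rw [ht] at h0 h1
  have h0' : (0 : ℤ) < b - a := by exact_mod_cast h0
  have h1' : (b - a : ℤ) < 1 := by exact_mod_cast h1
  omega

lemma parallel_cross {a b : ℤ} {t t' : ℝ} (h0 : 0 ≤ t) (h1 : t ≤ 1)
    (h0' : 0 ≤ t') (h1' : t' ≤ 1) (hab : a ≠ b)
    (h : (a : ℝ) + t = (b : ℝ) + t') :
    (t = 0 ∨ t = 1) ∧ (t' = 0 ∨ t' = 1) := by
  have ht : t - t' = ((b - a : ℤ) : ℝ) := by push_cast; linarith
  have hb1 : ((b - a : ℤ) : ℝ) ≤ 1 := by rw [← ht]; linarith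
  have hb2 : (-1 : ℝ) ≤ ((b - a : ℤ) : ℝ) := by rw [← ht]; linarith
  have hb1' : (b - a : ℤ) ≤ 1 := by exact_mod_cast hb1
  have hb2' : (-1 : ℤ) ≤ b - a := by exact_mod_cast hb2
  have : b - a = 1 ∨ b - a = -1 := by omega
  rcases this with h' | h'
  · rw [h'] at ht; push_cast at ht
    constructor
    · right; linarith
    · left; linarith
  · rw [h'] at ht; push_cast at ht
    constructor
    · left; linarith
    · right; linarith

/-- A graph whose vertices sit on the integer grid and whose edges all join points at
unit distance along an axis is planar (draw edges as straight segments). -/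
theorem grid_planar (G : SimpleGraph V) (p : V → ℝ × ℝ)
    (hinj : Function.Injective p)
    (hint : ∀ v, ∃ a b : ℤ, p v = ((a : ℝ), (b : ℝ)))
    (hH : ∀ u v, G.Adj u v →
      ((p u).1 = (p v).1 ∧ |(p u).2 - (p v).2| = 1) ∨
      ((p u).2 = (p v).2 ∧ |(p u).1 - (p v).1| = 1)) :
    IsPlanar G := by
  -- canonical data for every edge
  have key : ∀ e ∈ G.edgeSet, ∃ (u v : V) (a b : ℤ),
      gridEnds p e = (u, v) ∧ e = s(u, v) ∧ p u = ((a : ℝ), (b : ℝ)) ∧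
      (p v = ((a : ℝ), (b : ℝ) + 1) ∨ p v = ((a : ℝ) + 1, (b : ℝ))) := by
    intro e he
    set u := (gridEnds p e).1 with hu
    set v := (gridEnds p e).2 with hv
    have hmk : e = s(u, v) := gridEnds_mk p e
    have hadj : G.Adj u v := by
      rw [hmk] at he; exact he
    obtain ⟨a, b, hab⟩ := hint u
    refine ⟨u, v, a, b, rfl, hmk, hab, ?_⟩
    have hlex := gridEnds_lex p e
    rw [← hu, ← hv] at hlex
    rcases hH u v hadj with ⟨h1, h2⟩ | ⟨h1, h2⟩
    · left
      rcases hlex with h3 | ⟨h3, h4⟩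
      · rw [h1] at h3; exact absurd h3 (lt_irrefl _)
      · have h5 : (p u).2 - (p v).2 ≤ 0 := by linarith
        rw [abs_of_nonpos h5] at h2
        have hx : (p v).1 = (a : ℝ) := by rw [← h3, hab]
        have hy : (p v).2 = (b : ℝ) + 1 := by
          have : (p v).2 = (p u).2 + 1 := by linarith
          rw [this, hab]
        exact Prod.ext_iff.mpr ⟨hx, hy⟩
    · right
      rcases hlex with h3 | ⟨h3, h4⟩
      · have h5 : (p u).1 - (p v).1 ≤ 0 := by linarith
        rw [abs_of_nonpos h5] at h2
        have hx : (p v).1 = (a : ℝ) + 1 := by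
          have : (p v).1 = (p u).1 + 1 := by linarith
          rw [this, hab]
        have hy : (p v).2 = (b : ℝ) := by rw [← h1, hab]
        exact Prod.ext_iff.mpr ⟨hx, hy⟩
      · rw [h3] at h2; simp at h2
  -- the drawing
  refine ⟨p, gridGam p, hinj, ?_, ?_, ?_, ?_⟩
  · -- continuity and injectivity
    intro e he
    obtain ⟨u, v, a, b, hends, hmk, hpu, hpv⟩ := key e he
    constructor
    · unfold gridGam
      fun_prop
    · intro t t' htt
      unfold gridGam at htt
      rw [hends] at htt
      simp only at htt
      rcases hpv with hpv | hpv <;> rw [hpu, hpv] at htt <;>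
        · simp only [Prod.mk_sub_mk, sub_self, add_sub_cancel_left, Prod.smul_mk, smul_eq_mul, mul_zero, mul_one, add_zero, Prod.mk_add_mk, Prod.mk.injEq] at htt
          apply Subtype.ext
          rcases htt with ⟨htt1, htt2⟩
          first
          | linarith [htt1]
          | linarith [htt2]
  · -- endpoints
    intro e he
    obtain ⟨u, v, a, b, hends, hmk, hpu, hpv⟩ := key e he
    refine ⟨u, v, hmk, ?_, ?_⟩ <;>
      · unfold gridGam
        rw [hends]
        simp
  · -- interior avoids vertices
    intro e he t ht0 ht1 w
    obtain ⟨u, v, a, b, hends, hmk, hpu, hpv⟩ := key e he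
    obtain ⟨a', b', hw⟩ := hint w
    have h0 : (0:ℝ) < t := lt_of_le_of_ne t.2.1 (Ne.symm ht0)
    have h1 : (t:ℝ) < 1 := lt_of_le_of_ne t.2.2 ht1
    unfold gridGam
    rw [hends]
    simp only
    intro hcon
    rcases hpv with hpv | hpv <;> rw [hpu, hpv, hw] at hcon <;>
      simp only [Prod.mk_sub_mk, sub_self, add_sub_cancel_left, Prod.smul_mk, smul_eq_mul, mul_zero, mul_one, add_zero, Prod.mk_add_mk, Prod.mk.injEq] at hcon
    · exact no_int_in_open h0 h1 hcon.2
    · exact no_int_in_open h0 h1 hcon.1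
  · -- crossings only at endpoints
    intro e he e' he' hne t t' hcross
    obtain ⟨u, v, a, b, hends, hmk, hpu, hpv⟩ := key e he
    obtain ⟨u', v', a', b', hends', hmk', hpu', hpv'⟩ := key e' he'
    unfold gridGam at hcross
    rw [hends] at hcross
    rw [hends'] at hcross
    simp only at hcross
    have hVne : ¬ (p u = p u' ∧ p v = p v') := by
      rintro ⟨h1, h2⟩
      exact hne (by rw [hmk, hmk', hinj h1, hinj h2])
    have ht0 := t.2.1; have ht1 := t.2.2
    have ht0' := t'.2.1; have ht1' := t'.2.2
    rcases hpv with hpv | hpv <;> rcases hpv' with hpv' | hpv' <;>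
      rw [hpu, hpv, hpu', hpv'] at hcross <;>
      simp only [Prod.mk_sub_mk, sub_self, add_sub_cancel_left, Prod.smul_mk, smul_eq_mul, mul_zero, mul_one, add_zero, Prod.mk_add_mk, Prod.mk.injEq] at hcross <;>
      obtain ⟨hc1, hc2⟩ := hcross
    · -- both vertical
      have hx : (a:ℝ) = a' := hc1
      have hab : b ≠ b' := by
        intro hbb
        apply hVne
        have ha' : (a:ℝ) = (a':ℝ) := hx
        have hb' : (b:ℝ) = (b':ℝ) := by exact_mod_cast hbb
        rw [hpu, hpu', hpv, hpv', ha', hb']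
        exact ⟨rfl, rfl⟩
      exact parallel_cross ht0 ht1 ht0' ht1' hab hc2
    · -- e vertical, e' horizontal
      constructor
      · exact int_in_unit ht0 ht1 (b := b') hc2
      · exact int_in_unit ht0' ht1' (a := a') (b := a) (by linarith [hc1])
    · -- e horizontal, e' vertical
      constructor
      · exact int_in_unit ht0 ht1 (b := a') hc1
      · exact int_in_unit ht0' ht1' (a := b') (b := b) (by linarith [hc2])
    · -- both horizontal
      have hy : (b:ℝ) = b' := hc2
      have hab : a ≠ a' := by
        intro haa
        apply hVne
        have ha' : (a:ℝ) = (a':ℝ) := by exact_mod_cast haa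
        rw [hpu, hpu', hpv, hpv', ha', hy]
        exact ⟨rfl, rfl⟩
      have : (a:ℝ) + t = (a':ℝ) + t' := by nlinarith [hc1]
      exact parallel_cross ht0 ht1 ht0' ht1' hab this

end Grid

/-! ### The combinatorics of `TS_2` of a path -/

lemma Finset.min'_pair' {α : Type*} [DecidableEq α] [LinearOrder α] (a b : α) (h : a ≤ b) (H : ({a, b} : Finset α).Nonempty) :
    ({a, b} : Finset α).min' H = a := by
  apply le_antisymm
  · exact Finset.min'_le _ a (by simp)
  · apply Finset.le_min'
    intro y hy
    simp at hy
    rcases hy with rfl | rfl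
    · exact le_refl _
    · exact h

lemma Finset.max'_pair' {α : Type*} [DecidableEq α] [LinearOrder α] (a b : α) (h : a ≤ b) (H : ({a, b} : Finset α).Nonempty) :
    ({a, b} : Finset α).max' H = b := by
  apply le_antisymm
  · apply Finset.max'_le
    intro y hy
    simp at hy
    rcases hy with rfl | rfl
    · exact h
    · exact le_refl _
  · exact Finset.le_max' _ b (by simp)

lemma card_two_eq_pair {α : Type*} [LinearOrder α] [DecidableEq α] (I : Finset α) (h : I.card = 2)
    (H : I.Nonempty) : I.min' H < I.max' H ∧ I = {I.min' H, I.max' H} := by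
  have hlt : I.min' H < I.max' H := Finset.min'_lt_max'_of_card I (by omega)
  refine ⟨hlt, ?_⟩
  have hsub : ({I.min' H, I.max' H} : Finset α) ⊆ I := by
    intro x hx
    simp at hx
    rcases hx with rfl | rfl
    · exact Finset.min'_mem I H
    · exact Finset.max'_mem I H
  have hcard : I.card ≤ ({I.min' H, I.max' H} : Finset α).card := by
    rw [Finset.card_pair (ne_of_lt hlt), h]
  exact (Finset.eq_of_subset_of_card_le hsub hcard).symm

lemma minmax_of {α : Type*} [DecidableEq α] [LinearOrder α] (I : Finset α) (H : I.Nonempty) (a b : α)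
    (hab : a ≤ b) (hI : I = {a, b}) : I.min' H = a ∧ I.max' H = b := by
  subst hI
  exact ⟨Finset.min'_pair' a b hab _, Finset.max'_pair' a b hab _⟩

/-- For every `n ≥ 3`, the graph `TS_2(P_n)` is planar. -/
theorem stmt15 (n : ℕ) (hn : 3 ≤ n) :
    IsPlanar (TSk (SimpleGraph.pathGraph n) 2) := by
  set G := SimpleGraph.pathGraph n with hG
  have hne : ∀ I : TSVert G 2, (I : Finset (Fin n)).Nonempty := by
    intro I
    apply Finset.card_pos.mp
    rw [I.2.1]
    norm_num
  set p : TSVert G 2 → ℝ × ℝ := fun I =>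
    (((((I : Finset (Fin n)).min' (hne I) : Fin n) : ℕ) : ℝ),
     ((((I : Finset (Fin n)).max' (hne I) : Fin n) : ℕ) : ℝ)) with hp
  have hinj : Function.Injective p := by
    intro I J hIJ
    rw [hp] at hIJ
    simp only [Prod.mk.injEq, Nat.cast_inj] at hIJ
    have h1 : (I : Finset (Fin n)).min' (hne I) = (J : Finset (Fin n)).min' (hne J) :=
      Fin.ext hIJ.1
    have h2 : (I : Finset (Fin n)).max' (hne I) = (J : Finset (Fin n)).max' (hne J) :=
      Fin.ext hIJ.2
    have hI := (card_two_eq_pair _ I.2.1 (hne I)).2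
    have hJ := (card_two_eq_pair _ J.2.1 (hne J)).2
    apply Subtype.ext
    rw [hI, hJ, h1, h2]
  have hint : ∀ I, ∃ a b : ℤ, p I = ((a : ℝ), (b : ℝ)) := by
    intro I
    exact ⟨_, _, by rw [hp]; push_cast; rfl⟩
  -- one-sided adjacency analysis
  have aux : ∀ I J : TSVert G 2,
      (∃ u v, (I : Finset (Fin n)) \ (J : Finset (Fin n)) = {u} ∧
        (J : Finset (Fin n)) \ (I : Finset (Fin n)) = {v} ∧ G.Adj u v) →
      ((p I).1 = (p J).1 ∧ |(p I).2 - (p J).2| = 1) ∨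
      ((p I).2 = (p J).2 ∧ |(p I).1 - (p J).1| = 1) := by
    intro I J ⟨u, v, hIJ, hJI, huv⟩
    -- find the common vertex c
    have hcardI : (I : Finset (Fin n)).card = 2 := I.2.1
    have hcardJ : (J : Finset (Fin n)).card = 2 := J.2.1
    have hcap : ((I : Finset (Fin n)) ∩ (J : Finset (Fin n))).card = 1 := by
      have := Finset.card_sdiff_add_card_inter (I : Finset (Fin n)) (J : Finset (Fin n))
      rw [hIJ] at this
      simp at this
      omega
    obtain ⟨c, hc⟩ := Finset.card_eq_one.mp hcap
    have hIeq : (I : Finset (Fin n)) = {u, c} := by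
      have := Finset.sdiff_union_inter (I : Finset (Fin n)) (J : Finset (Fin n))
      rw [hIJ, hc] at this
      rw [← this]
      rfl
    have hJeq : (J : Finset (Fin n)) = {v, c} := by
      have := Finset.sdiff_union_inter (J : Finset (Fin n)) (I : Finset (Fin n))
      rw [hJI, Finset.inter_comm, hc] at this
      rw [← this]
      rfl
    -- basic distinctness
    have huJ : u ∉ (J : Finset (Fin n)) := by
      have : u ∈ (I : Finset (Fin n)) \ (J : Finset (Fin n)) := by rw [hIJ]; simp
      exact (Finset.mem_sdiff.mp this).2
    have hvI : v ∉ (I : Finset (Fin n)) := by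
      have : v ∈ (J : Finset (Fin n)) \ (I : Finset (Fin n)) := by rw [hJI]; simp
      exact (Finset.mem_sdiff.mp this).2
    have hcI : c ∈ (I : Finset (Fin n)) := by
      have : c ∈ (I : Finset (Fin n)) ∩ (J : Finset (Fin n)) := by rw [hc]; simp
      exact (Finset.mem_inter.mp this).1
    have hcJ : c ∈ (J : Finset (Fin n)) := by
      have : c ∈ (I : Finset (Fin n)) ∩ (J : Finset (Fin n)) := by rw [hc]; simp
      exact (Finset.mem_inter.mp this).2
    have huI : u ∈ (I : Finset (Fin n)) := by rw [hIeq]; simp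
    have hvJ : v ∈ (J : Finset (Fin n)) := by rw [hJeq]; simp
    have huc : u ≠ c := fun h => huJ (h ▸ hcJ)
    have hvc : v ≠ c := fun h => hvI (h ▸ hcI)
    -- independence constraints
    have hIindep := I.2.2
    have hJindep := J.2.2
    have hucAdj : ¬ G.Adj u c := hIindep u huI c hcI
    have hvcAdj : ¬ G.Adj v c := hJindep v hvJ c hcJ
    rw [hG, SimpleGraph.pathGraph_adj] at huv hucAdj hvcAdj
    push_neg at hucAdj hvcAdj
    have hucv : (u : ℕ) ≠ (c : ℕ) := fun h => huc (Fin.ext h)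
    have hvcv : (v : ℕ) ≠ (c : ℕ) := fun h => hvc (Fin.ext h)
    -- compute p I and p J
    have hminmaxI : ∀ (h : c < u), p I = (((c : ℕ) : ℝ), ((u : ℕ) : ℝ)) := by
      intro h
      have h2 : (I : Finset (Fin n)) = {c, u} := by rw [hIeq]; exact Finset.pair_comm u c
      obtain ⟨hm, hM⟩ := minmax_of _ (hne I) c u (le_of_lt h) h2
      rw [hp]
      simp only [hm, hM]
    have hminmaxI' : ∀ (h : u < c), p I = (((u : ℕ) : ℝ), ((c : ℕ) : ℝ)) := by
      intro h
      obtain ⟨hm, hM⟩ := minmax_of _ (hne I) u c (le_of_lt h) hIeq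
      rw [hp]
      simp only [hm, hM]
    have hminmaxJ : ∀ (h : c < v), p J = (((c : ℕ) : ℝ), ((v : ℕ) : ℝ)) := by
      intro h
      have h2 : (J : Finset (Fin n)) = {c, v} := by rw [hJeq]; exact Finset.pair_comm v c
      obtain ⟨hm, hM⟩ := minmax_of _ (hne J) c v (le_of_lt h) h2
      rw [hp]
      simp only [hm, hM]
    have hminmaxJ' : ∀ (h : v < c), p J = (((v : ℕ) : ℝ), ((c : ℕ) : ℝ)) := by
      intro h
      obtain ⟨hm, hM⟩ := minmax_of _ (hne J) v c (le_of_lt h) hJeq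
      rw [hp]
      simp only [hm, hM]
    rcases huv with huv | huv
    · -- v = u + 1
      have hcases : (c : ℕ) + 1 < (u : ℕ) ∨ (u : ℕ) + 2 < (c : ℕ) := by omega
      rcases hcases with hcu | hcu
      · -- c below
        have h1 : c < u := by rw [Fin.lt_def]; omega
        have h2 : c < v := by rw [Fin.lt_def]; omega
        rw [hminmaxI h1, hminmaxJ h2]
        left
        refine ⟨rfl, ?_⟩
        simp only
        have : ((v : ℕ) : ℝ) = ((u : ℕ) : ℝ) + 1 := by exact_mod_cast huv.symm
        rw [this]
        simp
      · -- c above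
        have h1 : u < c := by rw [Fin.lt_def]; omega
        have h2 : v < c := by rw [Fin.lt_def]; omega
        rw [hminmaxI' h1, hminmaxJ' h2]
        right
        refine ⟨rfl, ?_⟩
        simp only
        have : ((v : ℕ) : ℝ) = ((u : ℕ) : ℝ) + 1 := by exact_mod_cast huv.symm
        rw [this]
        simp
    · -- u = v + 1
      have hcases : (c : ℕ) + 1 < (v : ℕ) ∨ (v : ℕ) + 2 < (c : ℕ) := by omega
      rcases hcases with hcu | hcu
      · have h1 : c < u := by rw [Fin.lt_def]; omega
        have h2 : c < v := by rw [Fin.lt_def]; omega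
        rw [hminmaxI h1, hminmaxJ h2]
        left
        refine ⟨rfl, ?_⟩
        simp only
        have : ((u : ℕ) : ℝ) = ((v : ℕ) : ℝ) + 1 := by exact_mod_cast huv.symm
        rw [this]
        simp
      · have h1 : u < c := by rw [Fin.lt_def]; omega
        have h2 : v < c := by rw [Fin.lt_def]; omega
        rw [hminmaxI' h1, hminmaxJ' h2]
        right
        refine ⟨rfl, ?_⟩
        simp only
        have : ((u : ℕ) : ℝ) = ((v : ℕ) : ℝ) + 1 := by exact_mod_cast huv.symm
        rw [this]
        simp
  apply grid_planar _ p hinj hint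
  intro I J hadj
  rw [TSk, SimpleGraph.fromRel_adj] at hadj
  rcases hadj.2 with h | h
  · exact aux I J h
  · rcases aux J I h with ⟨h1, h2⟩ | ⟨h1, h2⟩
    · exact Or.inl ⟨h1.symm, by rwa [abs_sub_comm] at h2⟩
    · exact Or.inr ⟨h1.symm, by rwa [abs_sub_comm] at h2⟩
end

section
/- For integers k, n with 1 ≤ k < n/2, every vertex of TS_k(C_n) has even degree and TS_k(C_n) is connected; hence TS_k(C_n) is Eulerian. -/
open SimpleGraph

/-!
A neighbour of `I` in `TS_k(C_n)` is the same as a token `x ∈ I` together with a direction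
`±1` such that the position two steps away in that direction is free. Hence the degree of `I`
is `#{x ∈ I | x + 2 ∉ I} + #{x ∈ I | x - 2 ∉ I}`, and translation by `2` shows that the two
summands are equal.

For connectivity, sliding a token `x ≠ 0` with `x - 2 ∉ I` down to `x - 1` lowers
`∑ x ∈ I, x.val`. When no such slide exists, `I` is closed under `x ↦ x - 2` away from `0`; an
odd token would then force `1` and `n - 1` into `I` and so more than `k` tokens, hence `I`
consists of even positions below `2k`, i.e. `I = {0, 2, …, 2k - 2}`.
-/

open Finset Fin.CommRing

section Slide

variable {V : Type*} {G : SimpleGraph V} {I : Finset V} {u v : V}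

structure CanSlide (G : SimpleGraph V) (I : Finset V) (u v : V) : Prop where
  mem : u ∈ I
  adj : G.Adj u v
  not_adj : ∀ w ∈ I, w ≠ u → ¬ G.Adj v w

lemma CanSlide.notMem (h : CanSlide G I u v) (hI : IsIndep G I) : v ∉ I :=
  fun hv => hI u h.mem v hv h.adj

variable [DecidableEq V]

namespace CanSlide

lemma sdiff_insert_erase (h : CanSlide G I u v) : I \ insert v (I.erase u) = {u} := by
  grind [h.mem, h.adj.ne]

lemma insert_erase_sdiff (h : CanSlide G I u v) (hI : IsIndep G I) :
    insert v (I.erase u) \ I = {v} := by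
  grind [h.notMem hI]

lemma card_insert_erase (h : CanSlide G I u v) (hI : IsIndep G I) :
    #(insert v (I.erase u)) = #I := by
  rw [card_insert_of_notMem fun hv => h.notMem hI (mem_of_mem_erase hv),
    card_erase_add_one h.mem]

lemma isIndep_insert_erase (h : CanSlide G I u v) (hI : IsIndep G I) :
    IsIndep G (insert v (I.erase u)) := by
  intro a ha b hb hab
  simp only [mem_insert, mem_erase] at ha hb
  rcases ha with rfl | ⟨hau, ha⟩ <;> rcases hb with rfl | ⟨hbu, hb⟩
  · exact hab.ne rfl
  · exact h.not_adj b hb hbu hab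
  · exact h.not_adj a ha hau hab.symm
  · exact hI a ha b hb hab

end CanSlide

lemma eq_insert_erase_of_sdiff_eq {I J : Finset V} (hIJ : I \ J = {u}) (hJI : J \ I = {v}) :
    J = insert v (I.erase u) := by
  ext w
  have h1 := Finset.ext_iff.1 hIJ w
  have h2 := Finset.ext_iff.1 hJI w
  grind

namespace TSk

variable {k : ℕ}

lemma exists_adj_of_canSlide (I : TSVert G k) (h : CanSlide G I.1 u v) :
    ∃ J, (TSk G k).Adj I J ∧ J.1 = insert v (I.1.erase u) := by
  obtain ⟨I, hcard, hI⟩ := I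
  refine ⟨⟨insert v (I.erase u), (h.card_insert_erase hI).trans hcard,
    h.isIndep_insert_erase hI⟩, ?_, rfl⟩
  refine fromRel_adj .. |>.2 ⟨fun hIJ => ?_, .inl ⟨u, v, h.sdiff_insert_erase,
    h.insert_erase_sdiff hI, h.adj⟩⟩
  have hII : I = insert v (I.erase u) := congrArg Subtype.val hIJ
  simpa [← hII] using h.sdiff_insert_erase

lemma exists_canSlide_of_adj {I J : TSVert G k} (hIJ : (TSk G k).Adj I J) :
    ∃ u v, CanSlide G I.1 u v ∧ J.1 = insert v (I.1.erase u) := by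
  suffices ∀ u v, I.1 \ J.1 = {u} → J.1 \ I.1 = {v} → G.Adj u v →
      CanSlide G I.1 u v ∧ J.1 = insert v (I.1.erase u) by
    obtain ⟨-, ⟨u, v, hu, hv, huv⟩ | ⟨v, u, hv, hu, hvu⟩⟩ := (fromRel_adj ..).1 hIJ
    exacts [⟨u, v, this u v hu hv huv⟩, ⟨u, v, this u v hu hv hvu.symm⟩]
  intro u v hu hv huv
  have hJ := eq_insert_erase_of_sdiff_eq hu hv
  have hvJ : v ∈ J.1 := by simp [hJ]
  refine ⟨⟨(mem_sdiff.1 (hu ▸ mem_singleton_self u)).1, huv, fun w hw hwu => ?_⟩, hJ⟩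
  exact J.2.2 v hvJ w (by simp [hJ, hw, hwu])

lemma ncard_neighborSet (I : TSVert G k) :
    ((TSk G k).neighborSet I).ncard = {p : V × V | CanSlide G I.1 p.1 p.2}.ncard := by
  set slide : V × V → Finset V := fun p => insert p.2 (I.1.erase p.1)
  have himage : Subtype.val '' (TSk G k).neighborSet I =
      slide '' {p | CanSlide G I.1 p.1 p.2} := by
    ext F
    constructor
    · rintro ⟨J, hJ, rfl⟩
      obtain ⟨u, v, h, hJ⟩ := exists_canSlide_of_adj hJ
      exact ⟨(u, v), h, hJ.symm⟩
    · rintro ⟨⟨u, v⟩, h, rfl⟩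
      obtain ⟨J, hJ, hJv⟩ := exists_adj_of_canSlide I h
      exact ⟨J, hJ, hJv⟩
  have hinj : Set.InjOn slide {p | CanSlide G I.1 p.1 p.2} := by
    rintro ⟨u, v⟩ h ⟨u', v'⟩ h' heq
    have hu := h.sdiff_insert_erase
    have hv := h.insert_erase_sdiff I.2.2
    rw [show insert v (I.1.erase u) = insert v' (I.1.erase u') from heq] at hu hv
    exact Prod.ext (singleton_injective ((h'.sdiff_insert_erase).symm.trans hu)).symm
      (singleton_injective ((h'.insert_erase_sdiff I.2.2).symm.trans hv)).symm
  rw [← Set.ncard_image_of_injective _ Subtype.val_injective, himage, hinj.ncard_image]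

end TSk

end Slide

lemma card_filter_add_notMem_eq_card_filter_sub_notMem {A : Type*} [AddGroup A] [DecidableEq A] (s : Finset A) (d : A) :
    #{x ∈ s | x + d ∉ s} = #{x ∈ s | x - d ∉ s} := by
  have hmem : #{x ∈ s | x + d ∈ s} = #{x ∈ s | x - d ∈ s} :=
    card_nbij' (· + d) (· - d) (fun x => by simp +contextual) (fun x => by simp +contextual)
      (fun x _ => by simp) (fun x _ => by simp)
  have h₁ := card_filter_add_card_filter_not (s := s) (fun x => x + d ∈ s)
  have h₂ := card_filter_add_card_filter_not (s := s) (fun x => x - d ∈ s)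
  omega

section Cycle

variable {n : ℕ} [NeZero n]

lemma cycleGraph_adj_iff (hn : 2 ≤ n) {u v : Fin n} :
    (cycleGraph n).Adj u v ↔ v = u + 1 ∨ u = v + 1 := by
  obtain ⟨m, rfl⟩ := Nat.exists_eq_add_of_le' hn
  rw [← mem_neighborSet, cycleGraph_neighborSet, Set.mem_insert_iff, Set.mem_singleton_iff,
    eq_sub_iff_add_eq, eq_comm (a := v + 1), or_comm]

lemma val_two_of_three_le (hn : 3 ≤ n) : (2 : Fin n).val = 2 := Nat.mod_eq_of_lt hn

lemma two_ne_zero_of_three_le (hn : 3 ≤ n) : (2 : Fin n) ≠ 0 := fun h => by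
  simpa [h] using val_two_of_three_le hn

lemma val_sub_two_of_two_le {x : Fin n} (hx : 2 ≤ x.val) : (x - 2).val = x.val - 2 := by
  have h2 := val_two_of_three_le (n := n) (by omega)
  rw [Fin.sub_val_of_le (by rw [Fin.le_iff_val_le_val, h2]; exact hx), h2]

lemma canSlide_cycleGraph_iff (hn : 3 ≤ n) {I : Finset (Fin n)} {u v : Fin n} :
    CanSlide (cycleGraph n) I u v ↔
      u ∈ I ∧ (v = u + 1 ∧ u + 2 ∉ I ∨ v = u - 1 ∧ u - 2 ∉ I) := by
  have adj := @cycleGraph_adj_iff n _ (by omega)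
  have h2 := two_ne_zero_of_three_le hn
  constructor
  · rintro ⟨hu, huv, hfree⟩
    refine ⟨hu, ?_⟩
    rcases adj.1 huv with rfl | rfl
    · refine .inl ⟨rfl, fun h => hfree _ h (by simpa using h2) (adj.2 (.inl (by ring)))⟩
    · refine .inr ⟨by ring, fun h => hfree _ h (by simpa [sub_eq_add_neg] using h2)
        (adj.2 (.inr (by ring)))⟩
  · rintro ⟨hu, ⟨rfl, hfree⟩ | ⟨rfl, hfree⟩⟩
    · refine ⟨hu, adj.2 (.inl rfl), fun w hw hwu hadj => ?_⟩
      rcases adj.1 hadj with rfl | h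
      · exact hfree (by rwa [show u + 2 = u + 1 + 1 by ring])
      · exact hwu (add_right_cancel h).symm
    · refine ⟨hu, adj.2 (.inr (by ring)), fun w hw hwu hadj => ?_⟩
      rcases adj.1 hadj with rfl | h
      · exact hwu (by ring)
      · exact hfree (by rw [show u - 2 = w by rw [eq_sub_of_add_eq h.symm]; ring]; exact hw)

lemma ncard_setOf_canSlide_cycleGraph (hn : 3 ≤ n) (I : Finset (Fin n)) :
    {p : Fin n × Fin n | CanSlide (cycleGraph n) I p.1 p.2}.ncard =
      #{x ∈ I | x + 2 ∉ I} + #{x ∈ I | x - 2 ∉ I} := by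
  have hslides : {p : Fin n × Fin n | CanSlide (cycleGraph n) I p.1 p.2} =
      ↑({x ∈ I | x + 2 ∉ I}.image (fun x => (x, x + 1)) ∪
        {x ∈ I | x - 2 ∉ I}.image (fun x => (x, x - 1))) := by
    ext ⟨u, v⟩
    simp only [Set.mem_ofPred_eq, canSlide_cycleGraph_iff hn, coe_union, coe_image, coe_filter,
      Set.mem_union, Set.mem_image, Prod.mk.injEq]
    grind
  have hdisj : Disjoint ({x ∈ I | x + 2 ∉ I}.image (fun x => (x, x + 1)))
      ({x ∈ I | x - 2 ∉ I}.image (fun x => (x, x - 1))) := by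
    refine disjoint_left.2 fun p hp hq => two_ne_zero_of_three_le hn ?_
    simp only [mem_image] at hp hq
    obtain ⟨x, -, rfl⟩ := hp
    obtain ⟨y, -, hyx⟩ := hq
    simp only [Prod.mk.injEq] at hyx
    obtain ⟨rfl, h⟩ := hyx
    linear_combination -h
  rw [hslides, Set.ncard_coe_finset, card_union_of_disjoint hdisj,
    card_image_of_injective _ fun a b h => (Prod.ext_iff.1 h).1,
    card_image_of_injective _ fun a b h => (Prod.ext_iff.1 h).1]

lemma even_ncard_neighborSet_TSk_cycleGraph (hn : 3 ≤ n) {k : ℕ}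
    (I : TSVert (cycleGraph n) k) : Even ((TSk (cycleGraph n) k).neighborSet I).ncard := by
  rw [TSk.ncard_neighborSet, ncard_setOf_canSlide_cycleGraph hn, card_filter_add_notMem_eq_card_filter_sub_notMem]
  exact ⟨_, rfl⟩

end Cycle

def SubTwoClosed (S : Finset ℕ) : Prop := ∀ m ∈ S, 2 ≤ m → m - 2 ∈ S

lemma SubTwoClosed.mem_of_le {S : Finset ℕ} (hS : SubTwoClosed S) {m j : ℕ} (hm : m ∈ S)
    (hjm : j ≤ m) (hpar : j % 2 = m % 2) : j ∈ S := by
  induction m using Nat.strong_induction_on with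
  | _ m ih =>
    rcases hjm.eq_or_lt with rfl | hlt
    · exact hm
    · exact ih (m - 2) (by omega) (hS m hm (by omega)) (by omega) (by omega)

lemma SubTwoClosed.div_two_lt_card {S : Finset ℕ} (hS : SubTwoClosed S) {m : ℕ} (hm : m ∈ S) :
    m / 2 < #S := by
  have hsub : (range (m / 2 + 1)).image (fun i => m - 2 * i) ⊆ S := by
    intro j hj
    obtain ⟨i, hi, rfl⟩ := mem_image.1 hj
    exact hS.mem_of_le hm (by omega) (by rw [mem_range] at hi; omega)
  have hinj : Set.InjOn (fun i => m - 2 * i) (range (m / 2 + 1)) := by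
    intro a ha b hb hab
    simp only [coe_range, Set.mem_Iio] at ha hb hab
    omega
  have := card_le_card hsub
  rw [card_image_of_injOn hinj, card_range] at this
  omega

section Connectivity

variable {n k : ℕ} [NeZero n]

def evenPrefix (n k : ℕ) [NeZero n] : Finset (Fin n) :=
  (range k).image fun j => ((2 * j : ℕ) : Fin n)

lemma mem_evenPrefix (hn : 2 * k < n) {x : Fin n} :
    x ∈ evenPrefix n k ↔ x.val % 2 = 0 ∧ x.val < 2 * k := by
  simp only [evenPrefix, mem_image, mem_range, Fin.ext_iff, Fin.val_natCast]
  constructor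
  · rintro ⟨j, hj, hjx⟩
    have : 2 * j % n = 2 * j := Nat.mod_eq_of_lt (by omega)
    omega
  · rintro ⟨h0, hlt⟩
    exact ⟨x.val / 2, by omega, by rw [Nat.mod_eq_of_lt (by omega)]; omega⟩

lemma card_evenPrefix (hn : 2 * k < n) : #(evenPrefix n k) = k := by
  rw [evenPrefix, card_image_of_injOn, card_range]
  intro a ha b hb hab
  simp only [coe_range, Set.mem_Iio, Fin.ext_iff, Fin.val_natCast] at ha hb hab
  rw [Nat.mod_eq_of_lt (by omega), Nat.mod_eq_of_lt (by omega)] at hab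
  omega

lemma isIndep_evenPrefix (hn : 2 * k < n) : IsIndep (cycleGraph n) (evenPrefix n k) := by
  have odd_succ : ∀ x ∈ evenPrefix n k, x + 1 ∉ evenPrefix n k := by
    intro x hx hx1
    rw [mem_evenPrefix hn] at hx hx1
    rw [Fin.val_add_one_of_lt' (by omega)] at hx1
    omega
  intro u hu v hv huv
  have hn2 : 2 ≤ n := by have := (mem_evenPrefix hn).1 hu; omega
  rcases (cycleGraph_adj_iff hn2).1 huv with rfl | rfl
  exacts [odd_succ u hu hv, odd_succ v hv hu]

lemma eq_evenPrefix_of_forall_sub_two_mem (hn : 2 * k < n) {I : Finset (Fin n)}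
    (hcard : #I = k) (hI : ∀ x ∈ I, x ≠ 0 → x - 2 ∈ I) : I = evenPrefix n k := by
  set S := I.image Fin.val
  have mem_S : ∀ x : Fin n, x.val ∈ S ↔ x ∈ I := by simp [S, Fin.val_inj]
  have hS : SubTwoClosed S := by
    intro m hm h2
    obtain ⟨x, hx, rfl⟩ := mem_image.1 hm
    rw [← val_sub_two_of_two_le h2, mem_S]
    exact hI x hx (by rintro rfl; simp at h2)
  have hbound : ∀ x ∈ I, x.val / 2 < k := fun x hx => by
    simpa [S, card_image_of_injective _ Fin.val_injective, hcard] using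
      hS.div_two_lt_card ((mem_S x).2 hx)
  have heven : ∀ x ∈ I, x.val % 2 = 0 := by
    intro x hx
    by_contra hodd
    have hn3 : 3 ≤ n := by have := hbound x hx; omega
    have hv1 : (1 : Fin n).val = 1 := by rw [Fin.val_one', Nat.mod_eq_of_lt (by omega)]
    have h1S : 1 ∈ S := hS.mem_of_le ((mem_S x).2 hx) (j := 1) (by omega) (by omega)
    have h1 : (1 : Fin n) ∈ I := (mem_S 1).1 (by rwa [hv1])
    have := hbound _ (hI 1 h1 fun h => by simp [h] at hv1)
    rw [Fin.coe_sub_iff_lt.2 (Fin.lt_def.2 (by rw [hv1, val_two_of_three_le hn3]; omega)),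
      hv1, val_two_of_three_le hn3] at this
    omega
  refine eq_of_subset_of_card_le (fun x hx => (mem_evenPrefix hn).2 ⟨heven x hx, ?_⟩)
    (by rw [card_evenPrefix hn, hcard])
  have := hbound x hx
  have := heven x hx
  omega

lemma TSk_cycleGraph_reachable_of_eq_evenPrefix (hn : 2 * k < n) {J : TSVert (cycleGraph n) k}
    (hJ : J.1 = evenPrefix n k) (I : TSVert (cycleGraph n) k) :
    (TSk (cycleGraph n) k).Reachable I J := by
  induction hsum : ∑ x ∈ I.1, x.val using Nat.strong_induction_on generalizing I with
  | _ m ih =>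
  by_cases hstuck : ∀ x ∈ I.1, x ≠ 0 → x - 2 ∈ I.1
  · rw [Subtype.ext ((eq_evenPrefix_of_forall_sub_two_mem hn I.2.1 hstuck).trans hJ.symm)]
  push Not at hstuck
  obtain ⟨x, hx, hx0, hx2⟩ := hstuck
  have hn3 : 3 ≤ n := by
    have := card_pos.2 ⟨x, hx⟩
    have := I.2.1
    omega
  have hslide := (canSlide_cycleGraph_iff hn3).2 ⟨hx, .inr ⟨rfl, hx2⟩⟩
  obtain ⟨I', hII', hI'⟩ := TSk.exists_adj_of_canSlide I hslide
  refine hII'.reachable.trans (ih _ ?_ I' rfl)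
  have hnotMem : x - 1 ∉ I.1.erase x := fun h => hslide.notMem I.2.2 (mem_of_mem_erase h)
  rw [← hsum, hI', sum_insert hnotMem, ← add_sum_erase _ _ hx, Fin.val_sub_one_of_ne_zero hx0]
  have := Fin.val_ne_zero_iff.2 hx0
  omega

lemma TSk_cycleGraph_connected (hn : 2 * k < n) : (TSk (cycleGraph n) k).Connected :=
  (connected_iff_exists_forall_reachable _).2
    ⟨⟨evenPrefix n k, card_evenPrefix hn, isIndep_evenPrefix hn⟩,
      fun I => (TSk_cycleGraph_reachable_of_eq_evenPrefix hn rfl I).symm⟩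

end Connectivity

/-- For `1 ≤ k < n/2`, every vertex of `TS_k(C_n)` has even degree and `TS_k(C_n)` is
connected; hence `TS_k(C_n)` is Eulerian. -/
theorem stmt17 (n k : ℕ) (hk : 1 ≤ k) (hn : 2 * k < n) :
    (∀ I : TSVert (SimpleGraph.cycleGraph n) k,
      Even (((TSk (SimpleGraph.cycleGraph n) k).neighborSet I).ncard)) ∧
    (TSk (SimpleGraph.cycleGraph n) k).Connected := by
  have : NeZero n := ⟨by omega⟩
  exact ⟨even_ncard_neighborSet_TSk_cycleGraph (by omega), TSk_cycleGraph_connected hn⟩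
end
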